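/- arXiv:2601.15651 — 7 statements merged into one kernel-verified Lean document; each statement's English description precedes it below -/
import Mathlib

section
/- Let A be a nonempty subset of ℝ². Then μ(A) = 0 if and only if A has exactly one element (i.e., A is a subsingleton). -/
noncomputable section

/-- The plane with the Euclidean distance. -/
abbrev Plane : Type := EuclideanSpace ℝ (Fin 2)

/-- `m q i p = 1 / (1 + dist p (q i))`. -/
def m (q : ℕ → Plane) (i : ℕ) (p : Plane) : ℝ := 1 / (1 + dist p (q i))

/-- `μᵢ(A) = sup_{x,y ∈ A} |m_i x - m_i y|`. -/
def muI (q : ℕ → Plane) (i : ℕ) (A : Set Plane) : ℝ :=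
  sSup ((fun xy : Plane × Plane => |m q i xy.1 - m q i xy.2|) '' (A ×ˢ A))

/-- The Whitney function `μ(A) = Σ_i μᵢ(A) / 2^i`. -/
def mu (q : ℕ → Plane) (A : Set Plane) : ℝ := ∑' i : ℕ, muI q i A / 2 ^ i

lemma m_mem (q : ℕ → Plane) (i : ℕ) (p : Plane) : 0 < m q i p ∧ m q i p ≤ 1 := by
  have h : (0:ℝ) < 1 + dist p (q i) := by positivity
  constructor
  · exact div_pos one_pos h
  · rw [m, div_le_one h]; linarith [dist_nonneg (x := p) (y := q i)]

lemma abs_m_le (q : ℕ → Plane) (i : ℕ) (x y : Plane) :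
    |m q i x - m q i y| ≤ 1 := by
  obtain ⟨hx0, hx1⟩ := m_mem q i x
  obtain ⟨hy0, hy1⟩ := m_mem q i y
  rw [abs_sub_le_iff]; constructor <;> linarith

lemma muI_bddAbove (q : ℕ → Plane) (i : ℕ) (A : Set Plane) :
    BddAbove ((fun xy : Plane × Plane => |m q i xy.1 - m q i xy.2|) '' (A ×ˢ A)) := by
  refine ⟨1, ?_⟩
  rintro r ⟨⟨x, y⟩, _, rfl⟩
  exact abs_m_le q i x y

lemma muI_nonneg (q : ℕ → Plane) (i : ℕ) (A : Set Plane) (hA : A.Nonempty) :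
    0 ≤ muI q i A := by
  obtain ⟨a, ha⟩ := hA
  have h0 : |m q i a - m q i a| ∈
      (fun xy : Plane × Plane => |m q i xy.1 - m q i xy.2|) '' (A ×ˢ A) :=
    ⟨(a, a), ⟨ha, ha⟩, rfl⟩
  have := le_csSup (muI_bddAbove q i A) h0
  simp only [sub_self, abs_zero] at this; exact this

lemma muI_le_one (q : ℕ → Plane) (i : ℕ) (A : Set Plane) : muI q i A ≤ 1 := by
  apply Real.sSup_le
  · rintro r ⟨⟨x, y⟩, _, rfl⟩
    exact abs_m_le q i x y
  · exact zero_le_one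

lemma mu_summable (q : ℕ → Plane) (A : Set Plane) (hA : A.Nonempty) :
    Summable (fun i : ℕ => muI q i A / 2 ^ i) := by
  apply Summable.of_nonneg_of_le
    (fun i => div_nonneg (muI_nonneg q i A hA) (by positivity))
    (fun i => div_le_div_of_nonneg_right (muI_le_one q i A) (by positivity) |>.trans_eq
      (by rw [one_div, ← inv_pow]))
  exact summable_geometric_of_lt_one (by norm_num) (by norm_num)

/-- Whitney's theorem, item (i): `μ(A) = 0` iff `A` has exactly one element. -/
theorem whitney_mu_eq_zero_iff (q : ℕ → Plane) (hq : DenseRange q)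
    (A : Set Plane) (hA : A.Nonempty) :
    mu q A = 0 ↔ ∃ a : Plane, A = {a} := by
  constructor
  · intro h
    have hsum := mu_summable q A hA
    have hterm : ∀ i, muI q i A = 0 := by
      by_contra hc
      push_neg at hc
      obtain ⟨i, hi⟩ := hc
      have hpos : 0 < muI q i A / 2 ^ i := by
        have := lt_of_le_of_ne (muI_nonneg q i A hA) (Ne.symm hi)
        positivity
      have := Summable.tsum_pos hsum (fun j => div_nonneg (muI_nonneg q j A hA) (by positivity)) i hpos
      rw [mu] at h; linarith
    -- all m values agree on A
    have hm : ∀ i, ∀ x ∈ A, ∀ y ∈ A, m q i x = m q i y := by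
      intro i x hx y hy
      have hmem : |m q i x - m q i y| ∈
          (fun xy : Plane × Plane => |m q i xy.1 - m q i xy.2|) '' (A ×ˢ A) :=
        ⟨(x, y), ⟨hx, hy⟩, rfl⟩
      have hle := le_csSup (muI_bddAbove q i A) hmem
      rw [show sSup _ = muI q i A from rfl, hterm i] at hle
      have := abs_nonneg (m q i x - m q i y)
      have : |m q i x - m q i y| = 0 := le_antisymm hle this
      have := abs_eq_zero.mp this
      linarith
    have hdist : ∀ i, ∀ x ∈ A, ∀ y ∈ A, dist x (q i) = dist y (q i) := by
      intro i x hx y hy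
      have h1 := hm i x hx y hy
      have hx0 : (0:ℝ) < 1 + dist x (q i) := by positivity
      have hy0 : (0:ℝ) < 1 + dist y (q i) := by positivity
      rw [m, m, div_eq_div_iff hx0.ne' hy0.ne'] at h1
      linarith
    obtain ⟨a, ha⟩ := hA
    refine ⟨a, Set.eq_singleton_iff_unique_mem.mpr ⟨ha, fun x hx => ?_⟩⟩
    by_contra hne
    have hd : 0 < dist x a := dist_pos.mpr hne
    obtain ⟨i, hi⟩ := hq.exists_dist_lt x (half_pos hd)
    have h2 : dist x (q i) = dist a (q i) := hdist i x hx a ha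
    have h3 : dist x a ≤ dist x (q i) + dist (q i) a := dist_triangle x (q i) a
    rw [dist_comm (q i) a, ← h2] at h3
    linarith
  · rintro ⟨a, rfl⟩
    have hmuI : ∀ i, muI q i ({a} : Set Plane) = 0 := by
      intro i
      have : (fun xy : Plane × Plane => |m q i xy.1 - m q i xy.2|) ''
          (({a} : Set Plane) ×ˢ ({a} : Set Plane)) = {0} := by
        ext r
        simp [Set.mem_image, Prod.ext_iff, eq_comm]
      rw [muI, this, csSup_singleton]
    simp [mu, hmuI]
end
end

section
/- Let τ : ℝ² → ℝ be lower semicontinuous with 0 < τ(x) ≤ 1 for all x ∈ ℝ². Let W = {(x,t) ∈ ℝ² × ℝ | 0 ≤ t < τ(x)}, equipped with the subspace topology of ℝ² × ℝ. Then there exists a homeomorphism g from W onto ℝ² × [0,∞) that fixes the base space, i.e., the first component of g(x,t) equals x for every (x,t) ∈ W. -/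
open Metric Set Filter Topology

namespace BelowGraphAux

variable (τ : Plane → ℝ)

/-- The closed epigraph of `τ`. -/
def C : Set (Plane × ℝ) := {p | τ p.1 ≤ p.2}

/-- Distance to the epigraph. -/
noncomputable def ρ (p : Plane × ℝ) : ℝ := infDist p (C τ)

variable {τ}

lemma mem_C_self (x : Plane) : ((x, τ x) : Plane × ℝ) ∈ C τ := le_refl (τ x)

lemma C_nonempty (x : Plane) : (C τ).Nonempty := ⟨(x, τ x), mem_C_self x⟩

lemma C_closed (hlsc : LowerSemicontinuous τ) : IsClosed (C τ) := by
  rw [← isOpen_compl_iff, isOpen_iff_mem_nhds]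
  rintro ⟨x, s⟩ hp
  simp only [C, mem_compl_iff, mem_setOf_eq, not_le] at hp
  obtain ⟨c, hc1, hc2⟩ := exists_between hp
  have h1 : ∀ᶠ z in 𝓝 ((x, s) : Plane × ℝ), c < τ z.1 :=
    (continuous_fst.tendsto ((x, s) : Plane × ℝ)).eventually (hlsc x c hc2)
  have h2 : ∀ᶠ z in 𝓝 ((x, s) : Plane × ℝ), z.2 < c :=
    (continuous_snd.tendsto ((x, s) : Plane × ℝ)).eventually (eventually_lt_nhds hc1)
  filter_upwards [h1, h2] with z hz1 hz2
  simp only [C, mem_compl_iff, mem_setOf_eq, not_le]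
  exact lt_trans hz2 hz1

lemma ρ_nonneg (p : Plane × ℝ) : 0 ≤ ρ τ p := infDist_nonneg

lemma ρ_cont : Continuous (ρ τ) := continuous_infDist_pt _

lemma ρ_pos (hlsc : LowerSemicontinuous τ) {p : Plane × ℝ} (hp : p.2 < τ p.1) :
    0 < ρ τ p := by
  refine ((C_closed hlsc).notMem_iff_infDist_pos (C_nonempty p.1)).1 ?_
  exact fun h => absurd hp (not_lt.2 h)

lemma mem_C_of_rho_zero (hlsc : LowerSemicontinuous τ) {p : Plane × ℝ}
    (hp : ρ τ p = 0) : τ p.1 ≤ p.2 := by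
  by_contra h
  exact (ρ_pos hlsc (not_le.1 h)).ne' hp

/-- Pointwise bound: the distance from `(x, t₂)` to the epigraph is at most the
distance from `(x, t₁)` to any point of the epigraph, when `t₁ ≤ t₂`. -/
lemma ρ_le_dist (x : Plane) {t1 t2 : ℝ} (h : t1 ≤ t2) {q : Plane × ℝ} (hq : q ∈ C τ) :
    ρ τ (x, t2) ≤ dist (x, t1) q := by
  rcases le_or_gt t2 q.2 with hc | hc
  · calc ρ τ (x, t2) ≤ dist (x, t2) q := infDist_le_dist_of_mem hq
      _ ≤ dist (x, t1) q := by
        rw [Prod.dist_eq, Prod.dist_eq]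
        refine max_le_max le_rfl ?_
        rw [Real.dist_eq, Real.dist_eq, abs_of_nonpos (by linarith),
          abs_of_nonpos (by linarith)]
        linarith
  · have hq2 : (q.1, t2) ∈ C τ := le_trans hq hc.le
    calc ρ τ (x, t2) ≤ dist (x, t2) (q.1, t2) := infDist_le_dist_of_mem hq2
      _ = dist x q.1 := by
        rw [Prod.dist_eq, dist_self, max_eq_left dist_nonneg]
      _ ≤ dist (x, t1) q := by
        rw [Prod.dist_eq]
        exact le_max_left _ _

/-- `ρ` is antitone in the second variable. -/
lemma ρ_anti (x : Plane) {t1 t2 : ℝ} (h : t1 ≤ t2) : ρ τ (x, t2) ≤ ρ τ (x, t1) := by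
  by_contra hcon
  push_neg at hcon
  obtain ⟨q, hqC, hq⟩ := (infDist_lt_iff (C_nonempty x)).1 hcon
  exact absurd hq (not_lt.2 (ρ_le_dist x h hqC))

lemma ρ_le_sub (x : Plane) {t : ℝ} (ht : t ≤ τ x) : ρ τ (x, t) ≤ τ x - t := by
  have hmem : ((x, τ x) : Plane × ℝ) ∈ C τ := mem_C_self x
  calc ρ τ (x, t) ≤ dist (x, t) (x, τ x) := infDist_le_dist_of_mem hmem
    _ = τ x - t := by
      rw [Prod.dist_eq, dist_self, Real.dist_eq, abs_of_nonpos (by linarith),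
        max_eq_right (by linarith : (0:ℝ) ≤ -(t - τ x))]
      ring

/-- The fiber map `t ↦ t / ρ(x,t)` is strictly monotone on `[0, τ x)`. -/
lemma fiber_strictMono (hlsc : LowerSemicontinuous τ) (x : Plane) {t1 t2 : ℝ}
    (h0 : 0 ≤ t1) (h12 : t1 < t2) (h2 : t2 < τ x) :
    t1 / ρ τ (x, t1) < t2 / ρ τ (x, t2) := by
  have hρ2 : 0 < ρ τ (x, t2) := ρ_pos hlsc h2
  have hρ1 : 0 < ρ τ (x, t1) := ρ_pos hlsc (lt_trans h12 h2)
  have hanti : ρ τ (x, t2) ≤ ρ τ (x, t1) := ρ_anti x h12.le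
  calc t1 / ρ τ (x, t1) ≤ t1 / ρ τ (x, t2) := by gcongr
    _ < t2 / ρ τ (x, t2) := by gcongr

lemma fiber_injective (hlsc : LowerSemicontinuous τ) (x : Plane) {t1 t2 : ℝ}
    (h1 : 0 ≤ t1) (h1' : t1 < τ x) (h2 : 0 ≤ t2) (h2' : t2 < τ x)
    (heq : t1 / ρ τ (x, t1) = t2 / ρ τ (x, t2)) : t1 = t2 := by
  rcases lt_trichotomy t1 t2 with h | h | h
  · exact absurd heq (ne_of_lt (fiber_strictMono hlsc x h1 h h2'))
  · exact h
  · exact absurd heq.symm (ne_of_lt (fiber_strictMono hlsc x h2 h h1'))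

/-- Surjectivity of the fiber map: the fixed-point equation `t = u·ρ(x,t)`. -/
lemma fiber_exists (hlsc : LowerSemicontinuous τ) (hpos : ∀ x, 0 < τ x)
    (x : Plane) {u : ℝ} (hu : 0 ≤ u) :
    ∃ t : ℝ, 0 ≤ t ∧ t < τ x ∧ t = u * ρ τ (x, t) := by
  set h : ℝ → ℝ := fun t => t - u * ρ τ (x, t) with hh
  have hcont : ContinuousOn h (Icc 0 (τ x)) := by
    apply Continuous.continuousOn
    exact (continuous_id.sub (continuous_const.mul
      (ρ_cont.comp (Continuous.prodMk_right x))))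
  have h0 : h 0 ≤ 0 := by
    simp only [hh, zero_sub, neg_nonpos]
    exact mul_nonneg hu (ρ_nonneg _)
  have hτ : h (τ x) = τ x := by
    have : ρ τ (x, τ x) = 0 := infDist_zero_of_mem (mem_C_self x)
    simp [hh, this]
  have hmem : (0 : ℝ) ∈ Icc (h 0) (h (τ x)) := ⟨h0, by rw [hτ]; exact (hpos x).le⟩
  obtain ⟨t, htmem, ht⟩ := intermediate_value_Icc (hpos x).le hcont hmem
  have hteq : t = u * ρ τ (x, t) := by
    have := ht
    simp only [hh] at this
    linarith
  refine ⟨t, ?_, ?_, hteq⟩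
  · rw [hteq]; exact mul_nonneg hu (ρ_nonneg _)
  · rcases lt_or_eq_of_le htmem.2 with hlt | heq
    · exact hlt
    · exfalso
      have : ρ τ (x, t) = 0 := by rw [heq]; exact infDist_zero_of_mem (mem_C_self x)
      rw [this, mul_zero] at hteq
      rw [hteq] at heq
      exact (hpos x).ne heq

end BelowGraphAux

open Metric Set Filter Topology BelowGraphAux

/-- For a lower semicontinuous `τ : ℝ² → (0,1]`, the region
`W = {(x,t) | 0 ≤ t < τ(x)}` below the graph of `τ` is homeomorphic to
`ℝ² × [0,∞)` via a homeomorphism fixing the base space `ℝ²`. -/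
theorem exists_homeo_below_graph (τ : Plane → ℝ) (hlsc : LowerSemicontinuous τ)
    (hpos : ∀ x, 0 < τ x) (hle : ∀ x, τ x ≤ 1) :
    ∃ g : {p : Plane × ℝ // 0 ≤ p.2 ∧ p.2 < τ p.1} ≃ₜ Plane × Set.Ici (0 : ℝ),
      ∀ p : {p : Plane × ℝ // 0 ≤ p.2 ∧ p.2 < τ p.1}, (g p).1 = p.val.1 := by
  classical
  set W := {p : Plane × ℝ // 0 ≤ p.2 ∧ p.2 < τ p.1} with hW
  -- the forward map
  set g : W → Plane × Set.Ici (0 : ℝ) := fun p =>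
    (p.val.1, ⟨p.val.2 / ρ τ p.val, div_nonneg p.2.1 (ρ_nonneg _)⟩) with hg
  have hginj : Function.Injective g := by
    rintro ⟨⟨x1, t1⟩, h1⟩ ⟨⟨x2, t2⟩, h2⟩ heq
    simp only [hg, Prod.mk.injEq, Subtype.mk.injEq] at heq
    obtain ⟨hx, ht⟩ := heq
    subst hx
    have : t1 = t2 := fiber_injective hlsc x1 h1.1 h1.2 h2.1 h2.2 (congrArg Subtype.val ht)
    subst this
    rfl
  have hgsurj : Function.Surjective g := by
    rintro ⟨x, u, hu⟩
    obtain ⟨t, ht0, htlt, hteq⟩ := fiber_exists hlsc hpos x hu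
    refine ⟨⟨(x, t), ht0, htlt⟩, ?_⟩
    have hρ : 0 < ρ τ (x, t) := ρ_pos hlsc htlt
    refine Prod.ext rfl (Subtype.ext ?_)
    show t / ρ τ (x, t) = u
    rw [div_eq_iff hρ.ne']
    exact hteq
  set e : W ≃ Plane × Set.Ici (0 : ℝ) := Equiv.ofBijective g ⟨hginj, hgsurj⟩ with he
  -- continuity of the forward map
  have hcont_g : Continuous g := by
    apply Continuous.prodMk
    · exact (continuous_fst.comp continuous_subtype_val)
    · apply Continuous.subtype_mk
      apply Continuous.div
      · exact continuous_snd.comp continuous_subtype_val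
      · exact ρ_cont.comp continuous_subtype_val
      · rintro ⟨p, hp⟩
        exact (ρ_pos hlsc hp.2).ne'
  -- continuity of the inverse map, via sequences
  have hcont_symm : Continuous e.symm := by
    apply SeqContinuous.continuous
    rintro qn q hq
    set pn : ℕ → W := fun n => e.symm (qn n) with hpn
    set p : W := e.symm q with hp
    have hgpn : ∀ n, g (pn n) = qn n := fun n => e.apply_symm_apply (qn n)
    have hgp : g p = q := e.apply_symm_apply q
    -- notation
    set xn : ℕ → Plane := fun n => (qn n).1 with hxn
    set x : Plane := q.1 with hx
    set un : ℕ → ℝ := fun n => ((qn n).2 : ℝ) with hun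
    set u : ℝ := (q.2 : ℝ) with hu
    set tn : ℕ → ℝ := fun n => (pn n).val.2 with htn
    set t : ℝ := p.val.2 with ht
    have hxfst : ∀ n, (pn n).val.1 = xn n := fun n => congrArg Prod.fst (hgpn n)
    have hpfst : p.val.1 = x := congrArg Prod.fst hgp
    have hx_tend : Tendsto xn atTop (𝓝 x) := (continuous_fst.tendsto q).comp hq
    have hu_tend : Tendsto un atTop (𝓝 u) :=
      ((continuous_subtype_val.comp continuous_snd).tendsto q).comp hq
    have htn_eq : ∀ n, tn n = un n * ρ τ (xn n, tn n) := by
      intro n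
      have h1 : (pn n).val.2 / ρ τ (pn n).val = un n := by
        have := congrArg (fun z => (z.2 : ℝ)) (hgpn n)
        simpa using this
      have hρ : 0 < ρ τ ((pn n).val) := ρ_pos hlsc (pn n).2.2
      have : (pn n).val = (xn n, tn n) := by
        rw [← hxfst n]
      rw [← this]
      rw [← h1]
      field_simp
      rfl
    have ht_eqn : t = u * ρ τ (x, t) := by
      have h1 : p.val.2 / ρ τ p.val = u := by
        have := congrArg (fun z => (z.2 : ℝ)) hgp
        simpa using this
      have hρ : 0 < ρ τ (p.val) := ρ_pos hlsc p.2.2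
      have hpv : p.val = (x, t) := by rw [← hpfst]
      rw [← hpv, ← h1]
      field_simp
      rfl
    have htu : t / ρ τ (x, t) = u := by
      have hρ : 0 < ρ τ (x, t) := by
        have hpv : p.val = (x, t) := by rw [← hpfst]
        rw [← hpv]; exact ρ_pos hlsc p.2.2
      rw [div_eq_iff hρ.ne']; exact ht_eqn
    have hpW : 0 ≤ t ∧ t < τ x := by
      have hpv : p.val = (x, t) := by rw [← hpfst]
      have := p.2
      rw [hpv] at this
      exact this
    -- main convergence: tn → t
    have htn_tend : Tendsto tn atTop (𝓝 t) := by
      apply tendsto_of_subseq_tendsto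
      intro ns hns
      have hmem : ∀ k, tn (ns k) ∈ Icc (0 : ℝ) 1 := by
        intro k
        have h2 := (pn (ns k)).2
        exact ⟨h2.1, le_trans h2.2.le (hle _)⟩
      obtain ⟨tstar, hts_mem, ms, hms_mono, hms_tend⟩ :=
        isCompact_Icc.tendsto_subseq hmem
      refine ⟨ms, ?_⟩
      have hk_tend : Tendsto (fun k => ns (ms k)) atTop atTop :=
        hns.comp hms_mono.tendsto_atTop
      have hx_sub : Tendsto (fun k => xn (ns (ms k))) atTop (𝓝 x) :=
        hx_tend.comp hk_tend
      have hu_sub : Tendsto (fun k => un (ns (ms k))) atTop (𝓝 u) :=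
        hu_tend.comp hk_tend
      have ht_sub : Tendsto (fun k => tn (ns (ms k))) atTop (𝓝 tstar) := hms_tend
      have hρ_sub : Tendsto (fun k => ρ τ (xn (ns (ms k)), tn (ns (ms k)))) atTop
          (𝓝 (ρ τ (x, tstar))) := by
        have hpair : Tendsto (fun k => ((xn (ns (ms k)), tn (ns (ms k))) : Plane × ℝ))
            atTop (𝓝 (x, tstar)) := hx_sub.prodMk_nhds ht_sub
        exact (ρ_cont.tendsto _).comp hpair
      -- pass the fixed-point identity to the limit
      have hlim : tstar = u * ρ τ (x, tstar) := by
        have hlhs : Tendsto (fun k => tn (ns (ms k))) atTop (𝓝 tstar) := ht_sub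
        have hrhs : Tendsto (fun k => un (ns (ms k)) * ρ τ (xn (ns (ms k)), tn (ns (ms k))))
            atTop (𝓝 (u * ρ τ (x, tstar))) := hu_sub.mul hρ_sub
        have : (fun k => tn (ns (ms k))) =
            fun k => un (ns (ms k)) * ρ τ (xn (ns (ms k)), tn (ns (ms k))) := by
          funext k; exact htn_eq (ns (ms k))
        rw [this] at hlhs
        exact tendsto_nhds_unique hlhs hrhs
      -- identify the limit with t
      have hts_lt : tstar < τ x := by
        by_contra hcon
        push_neg at hcon
        have hρ0 : ρ τ (x, tstar) = 0 := infDist_zero_of_mem hcon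
        rw [hρ0, mul_zero] at hlim
        rw [hlim] at hcon
        exact absurd (hpos x) (not_lt.2 hcon)
      have hρ_pos' : 0 < ρ τ (x, tstar) := ρ_pos hlsc hts_lt
      have hts_u : tstar / ρ τ (x, tstar) = u := by
        rw [div_eq_iff hρ_pos'.ne']; exact hlim
      have : tstar = t := by
        apply fiber_injective hlsc x hts_mem.1 hts_lt hpW.1 hpW.2
        rw [hts_u, htu]
      rw [← this]
      exact ht_sub
    -- conclude convergence of pn to p
    rw [tendsto_subtype_rng]
    have hpv : p.val = (x, t) := by rw [← hpfst]
    rw [hpv]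
    have h1 : Tendsto (fun n => (pn n).val.1) atTop (𝓝 x) := by
      have : (fun n => (pn n).val.1) = xn := funext hxfst
      rw [this]; exact hx_tend
    exact h1.prodMk_nhds htn_tend
  refine ⟨⟨e, hcont_g, hcont_symm⟩, fun p => rfl⟩
end

section
/- The reduction map mod₄ : ℤ → ZMod 4, n ↦ (n : ZMod 4), is a covering map, where ℤ carries the Khalimsky topology and ZMod 4 carries the quotient topology coinduced by mod₄ from the Khalimsky topology. -/
/-- The Khalimsky (digital) topology on `ℤ`: generated by the singletons of odd
integers together with the triplets `{n-1, n, n+1}` around even integers. -/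
def khalimsky : TopologicalSpace ℤ :=
  TopologicalSpace.generateFrom
    ({S | ∃ n : ℤ, Odd n ∧ S = {n}} ∪ {S | ∃ n : ℤ, Even n ∧ S = {n - 1, n, n + 1}})

/-- The quotient topology on `ZMod 4` coinduced from the Khalimsky topology on `ℤ`
by the reduction map `n ↦ (n : ZMod 4)`. -/
def khalimskyMod4 : TopologicalSpace (ZMod 4) :=
  TopologicalSpace.coinduced (fun n : ℤ => (n : ZMod 4)) khalimsky

namespace KhalAux

open Topology TopologicalSpace

/-- A fixed bijection `ℤ ≃ ℕ`, used to index the sheets of the covering. -/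
noncomputable def enc : ℤ ≃ ℕ := Denumerable.eqv ℤ

/-- The basic Khalimsky neighbourhood of `m`. -/
def B (m : ℤ) : Set ℤ := if Even m then {m - 1, m, m + 1} else {m}

lemma mem_B {m b : ℤ} : b ∈ B m ↔ (b = m ∨ (Even m ∧ (b = m - 1 ∨ b = m + 1))) := by
  unfold B
  split <;> simp_all [Set.mem_insert_iff] <;> tauto

lemma self_mem_B (m : ℤ) : m ∈ B m := mem_B.mpr (Or.inl rfl)

lemma B_even {m b : ℤ} (hb : b ∈ B m) (he : Even b) : Even m ∧ m = b := by
  rcases mem_B.mp hb with rfl | ⟨⟨r, hr⟩, h | h⟩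
  · exact ⟨he, rfl⟩
  · rcases he with ⟨s, hs⟩; omega
  · rcases he with ⟨s, hs⟩; omega

lemma B_bound {m b : ℤ} (hb : b ∈ B m) : m - 1 ≤ b ∧ b ≤ m + 1 := by
  rcases mem_B.mp hb with rfl | ⟨_, h | h⟩ <;> omega

lemma isOpen_khalimsky {S : Set ℤ}
    (h : ∀ n ∈ S, Even n → ((n - 1) ∈ S ∧ (n + 1) ∈ S)) : IsOpen[khalimsky] S := by
  letI := khalimsky
  have hS : S = ⋃ n ∈ S, B n := by
    ext x
    simp only [Set.mem_iUnion, exists_prop]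
    constructor
    · intro hx; exact ⟨x, hx, self_mem_B x⟩
    · rintro ⟨n, hn, hx⟩
      rcases mem_B.mp hx with rfl | ⟨he, rfl | rfl⟩
      · exact hn
      · exact (h n hn he).1
      · exact (h n hn he).2
  rw [hS]
  refine isOpen_biUnion fun n _ => ?_
  show TopologicalSpace.GenerateOpen
    ({S | ∃ n : ℤ, Odd n ∧ S = {n}} ∪ {S | ∃ n : ℤ, Even n ∧ S = {n - 1, n, n + 1}}) (B n)
  unfold B
  split
  · exact TopologicalSpace.GenerateOpen.basic _ (Or.inr ⟨n, ‹_›, rfl⟩)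
  · exact TopologicalSpace.GenerateOpen.basic _ (Or.inl ⟨n, Int.not_even_iff_odd.mp ‹_›, rfl⟩)

lemma khalimsky_open_iff {S : Set ℤ} :
    IsOpen[khalimsky] S ↔ ∀ n ∈ S, Even n → ((n - 1) ∈ S ∧ (n + 1) ∈ S) := by
  refine ⟨fun h => ?_, isOpen_khalimsky⟩
  have h' : GenerateOpen
      ({S | ∃ n : ℤ, Odd n ∧ S = {n}} ∪ {S | ∃ n : ℤ, Even n ∧ S = {n - 1, n, n + 1}}) S := h
  clear h
  induction h' with
  | basic t ht =>
    rcases ht with ⟨n, ⟨r, hr⟩, rfl⟩ | ⟨n, ⟨r, hr⟩, rfl⟩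
    · rintro x rfl ⟨s, hs⟩; omega
    · rintro x hx ⟨s, hs⟩
      have hxn : x = n := by
        rcases hx with rfl | rfl | rfl <;> omega
      subst hxn
      exact ⟨by simp, by simp⟩
  | univ => simp
  | inter s t hs ht ihs iht =>
    rintro n ⟨hns, hnt⟩ he
    exact ⟨⟨(ihs n hns he).1, (iht n hnt he).1⟩, ⟨(ihs n hns he).2, (iht n hnt he).2⟩⟩
  | sUnion K hK ih =>
    rintro n ⟨t, htK, hnt⟩ he
    exact ⟨⟨t, htK, (ih t htK n hnt he).1⟩, ⟨t, htK, (ih t htK n hnt he).2⟩⟩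

lemma cast_eq_cast {a b : ℤ} (h : (4:ℤ) ∣ a - b) : ((a : ZMod 4)) = ((b : ZMod 4)) := by
  rw [ZMod.intCast_eq_intCast_iff]
  exact Int.modEq_iff_dvd.mpr (by omega)

lemma mem_image_iff {m n : ℤ} :
    (n : ZMod 4) ∈ (fun n : ℤ => (n : ZMod 4)) '' B m ↔ ∃ k b, b ∈ B m ∧ n = 4 * k + b := by
  constructor
  · rintro ⟨b, hb, hfb⟩
    have hd : ((4:ℕ):ℤ) ∣ n - b := Int.ModEq.dvd ((ZMod.intCast_eq_intCast_iff ..).mp hfb)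
    have hd' : (4:ℤ) ∣ n - b := by exact_mod_cast hd
    obtain ⟨k, hk⟩ := hd'
    exact ⟨k, b, hb, by omega⟩
  · rintro ⟨k, b, hb, rfl⟩
    exact ⟨b, hb, (cast_eq_cast (show (4:ℤ) ∣ (4 * k + b) - b from ⟨k, by ring⟩)).symm⟩

lemma val_sub {m b n : ℤ} (hb : b ∈ B m) (hd : (4:ℤ) ∣ n - b) :
    ((((n : ZMod 4) - ((m - 1 : ℤ) : ZMod 4)).val : ℤ)) = b - m + 1 := by
  rw [cast_eq_cast hd]
  have h1 : ((b : ZMod 4)) - ((m - 1 : ℤ) : ZMod 4) = ((b - (m - 1) : ℤ) : ZMod 4) := by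
    push_cast; ring
  rw [h1, ZMod.val_intCast]
  have := B_bound hb
  have h2 : (b - (m - 1)) % ((4:ℕ):ℤ) = b - (m - 1) := by
    push_cast; omega
  omega

lemma c_eq {m k b : ℤ} (hb : b ∈ B m) : (4 * k + b - m + 1) / 4 = k := by
  have := B_bound hb; omega

lemma isOpen_O {m k : ℤ} : IsOpen[khalimsky] ((fun b => 4 * k + b) '' B m) := by
  apply isOpen_khalimsky
  rintro n ⟨b, hb, rfl⟩ he
  dsimp only at he ⊢
  have hbe : Even b := by rcases he with ⟨r, hr⟩; exact ⟨r - 2 * k, by omega⟩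
  obtain ⟨hm, rfl⟩ := B_even hb hbe
  exact ⟨⟨m - 1, mem_B.mpr (Or.inr ⟨hm, Or.inl rfl⟩), by dsimp only; omega⟩,
    ⟨m + 1, mem_B.mpr (Or.inr ⟨hm, Or.inr rfl⟩), by dsimp only; omega⟩⟩

lemma isOpen_source {m : ℤ} :
    IsOpen[khalimsky] ((fun n : ℤ => (n : ZMod 4)) ⁻¹' ((fun n : ℤ => (n : ZMod 4)) '' B m)) := by
  apply isOpen_khalimsky
  intro n hn he
  rw [Set.mem_preimage] at hn
  obtain ⟨k, b, hb, rfl⟩ := mem_image_iff.mp hn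
  have hbe : Even b := by rcases he with ⟨r, hr⟩; exact ⟨r - 2 * k, by omega⟩
  obtain ⟨hm, rfl⟩ := B_even hb hbe
  constructor
  · exact Set.mem_preimage.mpr
      (mem_image_iff.mpr ⟨k, m - 1, mem_B.mpr (Or.inr ⟨hm, Or.inl rfl⟩), by omega⟩)
  · exact Set.mem_preimage.mpr
      (mem_image_iff.mpr ⟨k, m + 1, mem_B.mpr (Or.inr ⟨hm, Or.inr rfl⟩), by omega⟩)

lemma isOpen_baseSet {m : ℤ} :
    IsOpen[khalimskyMod4] ((fun n : ℤ => (n : ZMod 4)) '' B m) := by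
  unfold khalimskyMod4
  rw [isOpen_coinduced]
  exact isOpen_source

lemma isOpen_Sk {m k : ℤ} {V : Set ℤ} (hV : IsOpen[khalimsky] V) :
    IsOpen[khalimskyMod4]
      {y : ZMod 4 | y ∈ (fun n : ℤ => (n : ZMod 4)) '' B m ∧
        4 * k + (m - 1) + (((y - ((m - 1 : ℤ) : ZMod 4)).val : ℤ)) ∈ V} := by
  unfold khalimskyMod4
  rw [isOpen_coinduced]
  apply isOpen_khalimsky
  intro n hn he
  simp only [Set.mem_preimage, Set.mem_setOf_eq] at hn ⊢
  obtain ⟨hn1, hn2⟩ := hn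
  obtain ⟨k', b, hb, rfl⟩ := mem_image_iff.mp hn1
  have hbe : Even b := by rcases he with ⟨r, hr⟩; exact ⟨r - 2 * k', by omega⟩
  obtain ⟨hm, rfl⟩ := B_even hb hbe
  rw [val_sub (self_mem_B m) ⟨k', by ring⟩] at hn2
  have hv : 4 * k + m ∈ V := by
    have he' : 4 * k + (m - 1) + (m - m + 1) = 4 * k + m := by ring
    rwa [he'] at hn2
  have hVnb := (khalimsky_open_iff.mp hV) (4 * k + m) hv
    (by rcases hm with ⟨r, hr⟩; exact ⟨2 * k + r, by omega⟩)
  constructor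
  · constructor
    · exact mem_image_iff.mpr ⟨k', m - 1, mem_B.mpr (Or.inr ⟨hm, Or.inl rfl⟩), by omega⟩
    · rw [val_sub (mem_B.mpr (Or.inr ⟨hm, Or.inl rfl⟩))
        (show (4:ℤ) ∣ (4 * k' + m - 1) - (m - 1) from ⟨k', by ring⟩)]
      have he' : 4 * k + (m - 1) + (m - 1 - m + 1) = 4 * k + m - 1 := by ring
      rw [he']
      exact hVnb.1
  · constructor
    · exact mem_image_iff.mpr ⟨k', m + 1, mem_B.mpr (Or.inr ⟨hm, Or.inr rfl⟩), by omega⟩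
    · rw [val_sub (mem_B.mpr (Or.inr ⟨hm, Or.inr rfl⟩))
        (show (4:ℤ) ∣ (4 * k' + m + 1) - (m + 1) from ⟨k', by ring⟩)]
      have he' : 4 * k + (m - 1) + (m + 1 - m + 1) = 4 * k + m + 1 := by ring
      rw [he']
      exact hVnb.2

/-- A local trivialization of the mod-4 map over the image of `B m`. -/
noncomputable def triv (m : ℤ) :
    @Bundle.Trivialization (ZMod 4) ℕ ℤ khalimskyMod4 instTopologicalSpaceNat khalimsky
      (fun n : ℤ => (n : ZMod 4)) :=
  letI := khalimsky
  letI := khalimskyMod4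
  {
  toFun := fun n => ((n : ZMod 4), enc ((n - m + 1) / 4))
  invFun := fun p => 4 * (enc.symm p.2) + (m - 1) + (((p.1 - ((m - 1 : ℤ) : ZMod 4)).val : ℤ))
  source := (fun n : ℤ => (n : ZMod 4)) ⁻¹' ((fun n : ℤ => (n : ZMod 4)) '' B m)
  target := ((fun n : ℤ => (n : ZMod 4)) '' B m) ×ˢ Set.univ
  map_source' := fun n hn => ⟨hn, trivial⟩
  map_target' := by
    rintro ⟨y, j⟩ ⟨hy, -⟩
    obtain ⟨b, hb, rfl⟩ := hy
    rw [Set.mem_preimage]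
    dsimp only
    rw [val_sub hb (show (4:ℤ) ∣ b - b from ⟨0, by ring⟩)]
    exact mem_image_iff.mpr ⟨enc.symm j, b, hb, by ring⟩
  left_inv' := by
    intro n hn
    rw [Set.mem_preimage] at hn
    obtain ⟨k, b, hb, rfl⟩ := mem_image_iff.mp hn
    dsimp only
    rw [Equiv.symm_apply_apply, val_sub hb (show (4:ℤ) ∣ (4 * k + b) - b from ⟨k, by ring⟩),
      c_eq hb]
    ring
  right_inv' := by
    rintro ⟨y, j⟩ ⟨hy, -⟩
    obtain ⟨b, hb, rfl⟩ := hy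
    dsimp only
    rw [val_sub hb (show (4:ℤ) ∣ b - b from ⟨0, by ring⟩)]
    have h1 : 4 * (enc.symm j) + (m - 1) + (b - m + 1) = 4 * (enc.symm j) + b := by ring
    rw [h1]
    simp only [Prod.mk.injEq]
    constructor
    · exact cast_eq_cast ⟨enc.symm j, by ring⟩
    · rw [c_eq hb]
      simp
  open_source := isOpen_source
  open_target := by
    letI := khalimskyMod4
    exact (isOpen_baseSet).prod isOpen_univ
  continuousOn_toFun := by
    letI := khalimsky
    letI := khalimskyMod4
    apply ContinuousOn.prodMk
    · exact Continuous.continuousOn continuous_coinduced_rng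
    · rw [continuousOn_iff']
      intro t _
      refine ⟨⋃ (k : ℤ) (_ : enc k ∈ t), (fun b => 4 * k + b) '' B m,
        isOpen_iUnion fun k => isOpen_iUnion fun _ => isOpen_O, ?_⟩
      ext n
      simp only [Set.mem_inter_iff, Set.mem_preimage, Set.mem_iUnion, exists_prop]
      constructor
      · rintro ⟨hnt, hns⟩
        obtain ⟨k, b, hb, rfl⟩ := mem_image_iff.mp hns
        rw [c_eq hb] at hnt
        exact ⟨⟨k, hnt, b, hb, rfl⟩, hns⟩
      · rintro ⟨⟨k, hkt, b, hb, hnb⟩, hns⟩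
        dsimp only at hnb
        subst hnb
        rw [c_eq hb]
        exact ⟨hkt, hns⟩
  continuousOn_invFun := by
    letI := khalimsky
    letI := khalimskyMod4
    rw [continuousOn_iff']
    intro V hV
    refine ⟨(fun p : ZMod 4 × ℕ => 4 * (enc.symm p.2) + (m - 1) +
        (((p.1 - ((m - 1 : ℤ) : ZMod 4)).val : ℤ))) ⁻¹' V ∩
        (((fun n : ℤ => (n : ZMod 4)) '' B m) ×ˢ Set.univ), ?_, ?_⟩
    · have hdecomp : (fun p : ZMod 4 × ℕ => 4 * (enc.symm p.2) + (m - 1) +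
          (((p.1 - ((m - 1 : ℤ) : ZMod 4)).val : ℤ))) ⁻¹' V ∩
          (((fun n : ℤ => (n : ZMod 4)) '' B m) ×ˢ Set.univ) =
          ⋃ k : ℤ, ({y : ZMod 4 | y ∈ (fun n : ℤ => (n : ZMod 4)) '' B m ∧
            4 * k + (m - 1) + (((y - ((m - 1 : ℤ) : ZMod 4)).val : ℤ)) ∈ V} ×ˢ
            ({enc k} : Set ℕ)) := by
        ext ⟨y, j⟩
        simp only [Set.mem_inter_iff, Set.mem_preimage, Set.mem_prod, Set.mem_univ, and_true,
          Set.mem_iUnion, Set.mem_setOf_eq, Set.mem_singleton_iff]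
        constructor
        · rintro ⟨h1, h2⟩
          exact ⟨enc.symm j, ⟨h2, h1⟩, by simp⟩
        · rintro ⟨k, ⟨h2, h1⟩, rfl⟩
          refine ⟨?_, h2⟩
          simpa using h1
      rw [hdecomp]
      exact isOpen_iUnion fun k => (isOpen_Sk hV).prod (isOpen_discrete _)
    · rw [Set.inter_assoc, Set.inter_self]
  baseSet := (fun n : ℤ => (n : ZMod 4)) '' B m
  open_baseSet := isOpen_baseSet
  source_eq := rfl
  target_eq := rfl
  proj_toFun := fun _ _ => rfl }

end KhalAux

/-- The reduction map `mod₄ : ℤ → ZMod 4` is a covering map from the Khalimsky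
topology to its quotient topology. -/
theorem isCoveringMap_mod4 :
    @IsCoveringMap ℤ (ZMod 4) khalimsky khalimskyMod4 (fun n : ℤ => (n : ZMod 4)) := by
  refine @IsCoveringMap.mk ℤ (ZMod 4) khalimsky khalimskyMod4 _ (fun _ => ℕ) _ _
    (fun x => KhalAux.triv (x.val : ℤ)) fun x => ?_
  refine ⟨(x.val : ℤ), KhalAux.self_mem_B _, ?_⟩
  simp
end

section
/- The function σ : ℝ/2πℤ → ZMod 4 defined by σ(x) = 0 if x is the class of 0, σ(x) = 1 if x is the class of some t ∈ (0, π), σ(x) = 2 if x is the class of π, and σ(x) = 3 if x is the class of some t ∈ (π, 2π), is continuous, where ℝ/2πℤ carries its standard (quotient) topology and ZMod 4 carries the quotient topology coinduced from the Khalimsky topology on ℤ by the reduction map n ↦ (n : ZMod 4). -/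
lemma khalimsky_even {U : Set ℤ} (hU : khalimsky.IsOpen U) :
    ∀ n : ℤ, Even n → n ∈ U → (n - 1) ∈ U ∧ (n + 1) ∈ U := by
  have hU' : TopologicalSpace.GenerateOpen
      ({S | ∃ n : ℤ, Odd n ∧ S = {n}} ∪ {S | ∃ n : ℤ, Even n ∧ S = {n - 1, n, n + 1}}) U := hU
  induction hU' with
  | basic S hS =>
    rcases hS with ⟨m, hm, rfl⟩ | ⟨m, hm, rfl⟩
    · intro n hn hnS
      rw [Set.mem_singleton_iff] at hnS
      subst hnS
      exact absurd hm (Int.not_odd_iff_even.mpr hn)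
    · intro n hn hnS
      rcases hnS with h | h | h
      · exfalso
        obtain ⟨k, rfl⟩ := hm
        have hodd : Odd (k + k - 1) := ⟨k - 1, by ring⟩
        rw [h] at hn
        exact (Int.not_odd_iff_even.mpr hn) hodd
      · subst h
        exact ⟨Or.inl rfl, Or.inr (Or.inr rfl)⟩
      · exfalso
        obtain ⟨k, rfl⟩ := hm
        have hodd : Odd (k + k + 1) := ⟨k, by ring⟩
        rw [h] at hn
        exact (Int.not_odd_iff_even.mpr hn) hodd
  | univ => intro n _ _; exact ⟨trivial, trivial⟩
  | inter S T hS hT ihS ihT =>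
    intro n hn hnST
    exact ⟨⟨(ihS hS n hn hnST.1).1, (ihT hT n hn hnST.2).1⟩,
      ⟨(ihS hS n hn hnST.1).2, (ihT hT n hn hnST.2).2⟩⟩
  | sUnion 𝒮 hm ih =>
    rintro n hn ⟨S, hS, hnS⟩
    exact ⟨⟨S, hS, (ih S hS (hm S hS) n hn hnS).1⟩, ⟨S, hS, (ih S hS (hm S hS) n hn hnS).2⟩⟩

/-- The function `σ : ℝ/2πℤ → ZMod 4` recording whether an angle is `0`, in `(0,π)`,
equal to `π`, or in `(π,2π)` is continuous for the quotient Khalimsky topology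
on `ZMod 4`. -/
theorem sigma_continuous (σ : AddCircle (2 * Real.pi) → ZMod 4)
    (h0 : σ ((0 : ℝ) : AddCircle (2 * Real.pi)) = 0)
    (h1 : ∀ t : ℝ, t ∈ Set.Ioo 0 Real.pi → σ ((t : ℝ) : AddCircle (2 * Real.pi)) = 1)
    (h2 : σ ((Real.pi : ℝ) : AddCircle (2 * Real.pi)) = 2)
    (h3 : ∀ t : ℝ, t ∈ Set.Ioo Real.pi (2 * Real.pi) →
      σ ((t : ℝ) : AddCircle (2 * Real.pi)) = 3) :
    @Continuous (AddCircle (2 * Real.pi)) (ZMod 4) _ khalimskyMod4 σ := by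
  have hπ : (0:ℝ) < Real.pi := Real.pi_pos
  haveI : Fact ((0:ℝ) < 2 * Real.pi) := ⟨by linarith⟩
  -- the four pieces
  set P1 : Set (AddCircle (2 * Real.pi)) :=
    QuotientAddGroup.mk '' Set.Ioo 0 Real.pi with hP1
  set P3 : Set (AddCircle (2 * Real.pi)) :=
    QuotientAddGroup.mk '' Set.Ioo Real.pi (2 * Real.pi) with hP3
  set Q02 : Set (AddCircle (2 * Real.pi)) :=
    QuotientAddGroup.mk '' Set.Ioo (-Real.pi) Real.pi with hQ02
  set Q20 : Set (AddCircle (2 * Real.pi)) :=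
    QuotientAddGroup.mk '' Set.Ioo 0 (2 * Real.pi) with hQ20
  -- case analysis on a point of the circle
  have cases : ∀ x : AddCircle (2 * Real.pi),
      (x = ((0:ℝ) : AddCircle (2 * Real.pi)) ∧ σ x = 0) ∨
      (x ∈ P1 ∧ σ x = 1) ∨
      (x = ((Real.pi : ℝ) : AddCircle (2 * Real.pi)) ∧ σ x = 2) ∨
      (x ∈ P3 ∧ σ x = 3) := by
    intro x
    have hx : x ∈ QuotientAddGroup.mk '' Set.Ico (0:ℝ) (0 + 2 * Real.pi) := by
      rw [AddCircle.coe_image_Ico_eq]; trivial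
    obtain ⟨t, ht, rfl⟩ := hx
    rw [zero_add] at ht
    rcases eq_or_lt_of_le ht.1 with h | h
    · exact Or.inl ⟨by rw [← h], by rw [← h]; exact h0⟩
    rcases lt_trichotomy t Real.pi with h' | h' | h'
    · exact Or.inr (Or.inl ⟨⟨t, ⟨h, h'⟩, rfl⟩, h1 t ⟨h, h'⟩⟩)
    · subst h'; exact Or.inr (Or.inr (Or.inl ⟨rfl, h2⟩))
    · exact Or.inr (Or.inr (Or.inr ⟨⟨t, ⟨h', ht.2⟩, rfl⟩, h3 t ⟨h', ht.2⟩⟩))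
  -- membership of pieces in the big open sets
  have hP1Q02 : P1 ⊆ Q02 := by
    rintro _ ⟨t, ht, rfl⟩; exact ⟨t, ⟨by linarith [ht.1], ht.2⟩, rfl⟩
  have hP3Q02 : P3 ⊆ Q02 := by
    rintro _ ⟨t, ht, rfl⟩
    refine ⟨t - 2 * Real.pi, ⟨by linarith [ht.1], by linarith [ht.2]⟩, ?_⟩
    have := AddCircle.coe_add_period (2 * Real.pi) (t - 2 * Real.pi)
    rw [sub_add_cancel] at this
    exact this.symm
  have h0Q02 : ((0:ℝ) : AddCircle (2 * Real.pi)) ∈ Q02 := ⟨0, ⟨by linarith, hπ⟩, rfl⟩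
  have hQ02sub : Q02 ⊆ σ ⁻¹' {0, 1, 3} := by
    rintro _ ⟨t, ht, rfl⟩
    rcases lt_trichotomy t 0 with h | h | h
    · have : ((t : ℝ) : AddCircle (2 * Real.pi)) = ((t + 2 * Real.pi : ℝ) : AddCircle (2 * Real.pi)) :=
        (AddCircle.coe_add_period (2 * Real.pi) t).symm
      rw [Set.mem_preimage, this, h3 (t + 2 * Real.pi) ⟨by linarith [ht.1], by linarith⟩]
      simp
    · subst h; rw [Set.mem_preimage, h0]; simp
    · rw [Set.mem_preimage, h1 t ⟨h, ht.2⟩]; simp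
  have hQ20sub : Q20 ⊆ σ ⁻¹' {1, 2, 3} := by
    rintro _ ⟨t, ht, rfl⟩
    rcases lt_trichotomy t Real.pi with h | h | h
    · rw [Set.mem_preimage, h1 t ⟨ht.1, h⟩]; simp
    · subst h; rw [Set.mem_preimage, h2]; simp
    · rw [Set.mem_preimage, h3 t ⟨h, ht.2⟩]; simp
  -- openness of the pieces
  have oP1 : IsOpen P1 := QuotientAddGroup.isOpenMap_coe _ isOpen_Ioo
  have oP3 : IsOpen P3 := QuotientAddGroup.isOpenMap_coe _ isOpen_Ioo
  have oQ02 : IsOpen Q02 := QuotientAddGroup.isOpenMap_coe _ isOpen_Ioo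
  have oQ20 : IsOpen Q20 := QuotientAddGroup.isOpenMap_coe _ isOpen_Ioo
  rw [continuous_def]
  intro V hV
  have hVp : khalimsky.IsOpen ((fun n : ℤ => (n : ZMod 4)) ⁻¹' V) := hV
  have c0 : (0 : ZMod 4) ∈ V → (1 : ZMod 4) ∈ V ∧ (3 : ZMod 4) ∈ V := by
    intro h
    have := khalimsky_even hVp 0 Even.zero (by simpa using h)
    constructor
    · have h1' := this.2
      simpa using h1'
    · have h3' := this.1
      have : (((0:ℤ) - 1 : ℤ) : ZMod 4) = 3 := by decide
      simpa [this, show (-1 : ZMod 4) = 3 from by decide] using h3'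
  have c2 : (2 : ZMod 4) ∈ V → (1 : ZMod 4) ∈ V ∧ (3 : ZMod 4) ∈ V := by
    intro h
    have := khalimsky_even hVp 2 (by decide) (by simpa using h)
    constructor
    · have h1' := this.1
      have : (((2:ℤ) - 1 : ℤ) : ZMod 4) = 1 := by decide
      simpa [this] using h1'
    · have h3' := this.2
      have : (((2:ℤ) + 1 : ℤ) : ZMod 4) = 3 := by decide
      simpa [this] using h3'
  -- now classify V
  by_cases hV0 : (0 : ZMod 4) ∈ V <;> by_cases hV2 : (2 : ZMod 4) ∈ V
  · -- V = univ
    have hV1 := (c0 hV0).1; have hV3 := (c0 hV0).2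
    have : σ ⁻¹' V = Set.univ := by
      apply Set.eq_univ_of_forall
      intro x
      rcases cases x with ⟨_, hs⟩ | ⟨_, hs⟩ | ⟨_, hs⟩ | ⟨_, hs⟩ <;>
        simp only [Set.mem_preimage, hs] <;> assumption
    rw [this]; exact isOpen_univ
  · -- 0 ∈ V, 2 ∉ V : σ⁻¹ V = Q02
    have hV1 := (c0 hV0).1; have hV3 := (c0 hV0).2
    have : σ ⁻¹' V = Q02 := by
      apply Set.Subset.antisymm
      · intro x hx
        rcases cases x with ⟨hx0, hs⟩ | ⟨hm, hs⟩ | ⟨hx2, hs⟩ | ⟨hm, hs⟩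
        · rw [hx0]; exact h0Q02
        · exact hP1Q02 hm
        · exact absurd (hs ▸ hx) hV2
        · exact hP3Q02 hm
      · intro x hx
        rcases hQ02sub hx with h | h | h
        · show σ x ∈ V; rw [h]; exact hV0
        · show σ x ∈ V; rw [h]; exact hV1
        · show σ x ∈ V; rw [h]; exact hV3
    rw [this]; exact oQ02
  · -- 0 ∉ V, 2 ∈ V : σ⁻¹ V = Q20
    have hV1 := (c2 hV2).1; have hV3 := (c2 hV2).2
    have : σ ⁻¹' V = Q20 := by
      apply Set.Subset.antisymm
      · intro x hx
        rcases cases x with ⟨hx0, hs⟩ | ⟨hm, hs⟩ | ⟨hx2, hs⟩ | ⟨hm, hs⟩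
        · exact absurd (hs ▸ hx) hV0
        · rcases hm with ⟨t, ht, rfl⟩; exact ⟨t, ⟨ht.1, by linarith [ht.2]⟩, rfl⟩
        · rw [hx2]; exact ⟨Real.pi, ⟨hπ, by linarith⟩, rfl⟩
        · rcases hm with ⟨t, ht, rfl⟩; exact ⟨t, ⟨by linarith [ht.1], ht.2⟩, rfl⟩
      · intro x hx
        rcases hQ20sub hx with h | h | h
        · show σ x ∈ V; rw [h]; exact hV1
        · show σ x ∈ V; rw [h]; exact hV2
        · show σ x ∈ V; rw [h]; exact hV3
    rw [this]; exact oQ20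
  · -- 0 ∉ V, 2 ∉ V : σ⁻¹ V = (P1 if 1∈V) ∪ (P3 if 3∈V)
    by_cases hV1 : (1 : ZMod 4) ∈ V <;> by_cases hV3 : (3 : ZMod 4) ∈ V
    · have : σ ⁻¹' V = P1 ∪ P3 := by
        apply Set.Subset.antisymm
        · intro x hx
          rcases cases x with ⟨_, hs⟩ | ⟨hm, _⟩ | ⟨_, hs⟩ | ⟨hm, _⟩
          · exact absurd (hs ▸ hx) hV0
          · exact Or.inl hm
          · exact absurd (hs ▸ hx) hV2
          · exact Or.inr hm
        · rintro x (⟨t, ht, rfl⟩ | ⟨t, ht, rfl⟩)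
          · simpa [Set.mem_preimage, h1 t ht] using hV1
          · simpa [Set.mem_preimage, h3 t ht] using hV3
      rw [this]; exact oP1.union oP3
    · have : σ ⁻¹' V = P1 := by
        apply Set.Subset.antisymm
        · intro x hx
          rcases cases x with ⟨_, hs⟩ | ⟨hm, _⟩ | ⟨_, hs⟩ | ⟨_, hs⟩
          · exact absurd (hs ▸ hx) hV0
          · exact hm
          · exact absurd (hs ▸ hx) hV2
          · exact absurd (hs ▸ hx) hV3
        · rintro x ⟨t, ht, rfl⟩
          simpa [Set.mem_preimage, h1 t ht] using hV1
      rw [this]; exact oP1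
    · have : σ ⁻¹' V = P3 := by
        apply Set.Subset.antisymm
        · intro x hx
          rcases cases x with ⟨_, hs⟩ | ⟨_, hs⟩ | ⟨_, hs⟩ | ⟨hm, _⟩
          · exact absurd (hs ▸ hx) hV0
          · exact absurd (hs ▸ hx) hV1
          · exact absurd (hs ▸ hx) hV2
          · exact hm
        · rintro x ⟨t, ht, rfl⟩
          simpa [Set.mem_preimage, h3 t ht] using hV3
      rw [this]; exact oP3
    · have : σ ⁻¹' V = ∅ := by
        apply Set.eq_empty_of_forall_notMem
        intro x hx
        rcases cases x with ⟨_, hs⟩ | ⟨_, hs⟩ | ⟨_, hs⟩ | ⟨_, hs⟩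
        · exact hV0 (hs ▸ hx)
        · exact hV1 (hs ▸ hx)
        · exact hV2 (hs ▸ hx)
        · exact hV3 (hs ▸ hx)
      rw [this]; exact isOpen_empty
end

section
/- Define θ on the configuration space {(z, z') ∈ ℝ² × ℝ² | z ≠ z'} with values in ZMod 4 by: θ(z,z') = 0 if z and z' have equal second coordinates and the first coordinate of z' is greater than that of z; θ(z,z') = 1 if the second coordinate of z' is greater than that of z; θ(z,z') = 2 if z and z' have equal second coordinates and the first coordinate of z' is less than that of z; θ(z,z') = 3 if the second coordinate of z' is less than that of z. Then θ is continuous, where the configuration space carries the subspace topology of ℝ² × ℝ² and ZMod 4 carries the quotient topology coinduced from the Khalimsky topology on ℤ. -/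
/-!
An open set of the Khalimsky line containing an even integer `n` contains `n ± 1`, so an open
subset of `ZMod 4` containing `0` or `2` contains `1` and `3`. Hence a map into `ZMod 4` is
continuous as soon as, near each point, it keeps its value or jumps from an even value to an
odd one. The angle function `θ` has this
property: `θ = 1` and `θ = 3` on the open sets `y < y'` and `y' < y`, while near a point on a
horizontal half-leaf the strict inequality between the first coordinates persists, so `θ` either
keeps its value or the point has left the leaf and `θ` is odd.
-/

open Filter Topology

lemma khalimsky_isOpen_neighbours_mem {U : Set ℤ} (hU : IsOpen[khalimsky] U) {n : ℤ}
    (hn : Even n) (hnU : n ∈ U) : n - 1 ∈ U ∧ n + 1 ∈ U := by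
  induction hU generalizing n with
  | basic s hs =>
    rcases hs with ⟨m, hm, rfl⟩ | ⟨m, hm, rfl⟩
    · rw [Set.mem_singleton_iff] at hnU
      subst hnU
      exact absurd hm (Int.not_odd_iff_even.mpr hn)
    · rw [Int.even_iff] at hn hm
      simp only [Set.mem_insert_iff, Set.mem_singleton_iff] at hnU ⊢
      omega
  | univ => simp
  | inter s t _ _ ihs iht =>
    obtain ⟨hs₁, hs₂⟩ := ihs hn hnU.1
    obtain ⟨ht₁, ht₂⟩ := iht hn hnU.2
    exact ⟨⟨hs₁, ht₁⟩, ⟨hs₂, ht₂⟩⟩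
  | sUnion S _ ih =>
    obtain ⟨s, hsS, hns⟩ := hnU
    obtain ⟨h₁, h₂⟩ := ih s hsS hn hns
    exact ⟨⟨s, hsS, h₁⟩, ⟨s, hsS, h₂⟩⟩

lemma khalimskyMod4_isOpen_odd_mem {U : Set (ZMod 4)} (hU : IsOpen[khalimskyMod4] U)
    {k : ZMod 4} (hk : k = 0 ∨ k = 2) (hkU : k ∈ U) : 1 ∈ U ∧ 3 ∈ U := by
  have hU' : IsOpen[khalimsky] ((fun n : ℤ => (n : ZMod 4)) ⁻¹' U) := hU
  rcases hk with rfl | rfl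
  · obtain ⟨h₃, h₁⟩ := khalimsky_isOpen_neighbours_mem hU' Even.zero (by simpa using hkU)
    exact ⟨by simpa using h₁, by simpa [show (-1 : ZMod 4) = 3 by decide] using h₃⟩
  · obtain ⟨h₁, h₃⟩ := khalimsky_isOpen_neighbours_mem hU' even_two (by simpa using hkU)
    exact ⟨by simpa using h₁, by simpa using h₃⟩

lemma continuous_khalimskyMod4_of_eventually {X : Type*} [TopologicalSpace X] {f : X → ZMod 4}
    (hf : ∀ x, ∀ᶠ y in 𝓝 x, f y = f x ∨ (f x = 0 ∨ f x = 2) ∧ (f y = 1 ∨ f y = 3)) :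
    @Continuous X (ZMod 4) _ khalimskyMod4 f := by
  refine continuous_def.2 fun U hU => isOpen_iff_mem_nhds.2 fun x hx => ?_
  filter_upwards [hf x] with y hy
  rcases hy with hy | ⟨hx_even, hy | hy⟩
  · rwa [Set.mem_preimage, hy]
  · rw [Set.mem_preimage, hy]
    exact (khalimskyMod4_isOpen_odd_mem hU hx_even hx).1
  · rw [Set.mem_preimage, hy]
    exact (khalimskyMod4_isOpen_odd_mem hU hx_even hx).2

/-- The topological angle function of the horizontal foliation of the plane is
continuous from the configuration space `{(z,z') | z ≠ z'}` (subspace topology)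
to `ZMod 4` with the quotient Khalimsky topology. -/
theorem theta_continuous
    (θ : {p : (ℝ × ℝ) × (ℝ × ℝ) // p.1 ≠ p.2} → ZMod 4)
    (h0 : ∀ p, p.val.2.2 = p.val.1.2 → p.val.1.1 < p.val.2.1 → θ p = 0)
    (h1 : ∀ p, p.val.1.2 < p.val.2.2 → θ p = 1)
    (h2 : ∀ p, p.val.2.2 = p.val.1.2 → p.val.2.1 < p.val.1.1 → θ p = 2)
    (h3 : ∀ p, p.val.2.2 < p.val.1.2 → θ p = 3) :
    @Continuous {p : (ℝ × ℝ) × (ℝ × ℝ) // p.1 ≠ p.2} (ZMod 4) _ khalimskyMod4 θ := by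
  have hθ_odd : ∀ q, q.val.2.2 ≠ q.val.1.2 → θ q = 1 ∨ θ q = 3 := fun q hq =>
    (lt_or_gt_of_ne hq).elim (fun h => .inr (h3 q h)) (fun h => .inl (h1 q h))
  refine continuous_khalimskyMod4_of_eventually fun p => ?_
  rcases lt_trichotomy p.val.1.2 p.val.2.2 with hy | hy | hy
  · filter_upwards [continuous_subtype_val.fst.snd.continuousAt.eventually_lt
      continuous_subtype_val.snd.snd.continuousAt hy] with q hq
    exact .inl (by rw [h1 q hq, h1 p hy])
  · rcases lt_trichotomy p.val.1.1 p.val.2.1 with hx | hx | hx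
    · filter_upwards [continuous_subtype_val.fst.fst.continuousAt.eventually_lt
        continuous_subtype_val.snd.fst.continuousAt hx] with q hq
      rw [h0 p hy.symm hx]
      by_cases hqy : q.val.2.2 = q.val.1.2
      · exact .inl (h0 q hqy hq)
      · exact .inr ⟨.inl rfl, hθ_odd q hqy⟩
    · exact absurd (Prod.ext hx hy) p.2
    · filter_upwards [continuous_subtype_val.snd.fst.continuousAt.eventually_lt
        continuous_subtype_val.fst.fst.continuousAt hx] with q hq
      rw [h2 p hy.symm hx]
      by_cases hqy : q.val.2.2 = q.val.1.2
      · exact .inl (h2 q hqy hq)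
      · exact .inr ⟨.inr rfl, hθ_odd q hqy⟩
  · filter_upwards [continuous_subtype_val.snd.snd.continuousAt.eventually_lt
      continuous_subtype_val.fst.snd.continuousAt hy] with q hq
    exact .inl (by rw [h3 q hq, h3 p hy])
end

section
/- Let X be a preconnected topological space and let Θ, Θ' : X → ℤ be continuous, where ℤ carries the Khalimsky topology. Suppose that for every x ∈ X the reductions agree: (Θ(x) : ZMod 4) = (Θ'(x) : ZMod 4). Then there exists an integer k such that Θ'(x) = Θ(x) + 4k for all x ∈ X; in particular, two lifts of the same map through reduction mod 4 differ by a constant integer multiple of 4. -/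
lemma khal_open {S : Set ℤ}
    (h : S ∈ ({S | ∃ n : ℤ, Odd n ∧ S = {n}} ∪
      {S | ∃ n : ℤ, Even n ∧ S = {n - 1, n, n + 1} } : Set (Set ℤ))) :
    @IsOpen ℤ khalimsky S :=
  TopologicalSpace.GenerateOpen.basic S h

/-- Two continuous (Khalimsky) integer-valued lifts of the same `ZMod 4`-valued map
on a preconnected space differ by a constant integer multiple of `4`. -/
theorem lifts_differ_by_constant_multiple_of_four {X : Type*} [TopologicalSpace X]
    [PreconnectedSpace X] (Θ Θ' : X → ℤ)
    (hΘ : @Continuous X ℤ _ khalimsky Θ) (hΘ' : @Continuous X ℤ _ khalimsky Θ')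
    (hmod : ∀ x : X, ((Θ x : ZMod 4)) = ((Θ' x : ZMod 4))) :
    ∃ k : ℤ, ∀ x : X, Θ' x = Θ x + 4 * k := by
  have hdvd : ∀ x, (4 : ℤ) ∣ Θ' x - Θ x := by
    intro x
    have h0 : ((Θ' x - Θ x : ℤ) : ZMod 4) = 0 := by
      push_cast
      rw [← hmod x]
      ring
    exact (ZMod.intCast_zmod_eq_zero_iff_dvd _ 4).mp (by exact_mod_cast h0)
  have hlc : IsLocallyConstant (fun x => Θ' x - Θ x) := by
    rw [IsLocallyConstant.iff_exists_open]
    intro x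
    rcases Int.even_or_odd (Θ x) with he | ho
    · have he' : Even (Θ' x) := by
        rcases hdvd x with ⟨c, hc⟩; rcases he with ⟨a, ha⟩; exact ⟨a + 2 * c, by omega⟩
      refine ⟨Θ ⁻¹' {Θ x - 1, Θ x, Θ x + 1} ∩ Θ' ⁻¹' {Θ' x - 1, Θ' x, Θ' x + 1},
        ?_, ⟨?_, ?_⟩, ?_⟩
      · exact (@Continuous.isOpen_preimage X ℤ _ khalimsky Θ hΘ _ (khal_open (Or.inr ⟨_, he, rfl⟩))).inter
          (@Continuous.isOpen_preimage X ℤ _ khalimsky Θ' hΘ' _ (khal_open (Or.inr ⟨_, he', rfl⟩)))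
      · exact Or.inr (Or.inl rfl)
      · exact Or.inr (Or.inl rfl)
      · rintro y ⟨h1, h2⟩
        simp only [Set.mem_preimage, Set.mem_insert_iff, Set.mem_singleton_iff] at h1 h2
        rcases hdvd x with ⟨c, hc⟩
        rcases hdvd y with ⟨c', hc'⟩
        omega
    · have ho' : Odd (Θ' x) := by
        rcases hdvd x with ⟨c, hc⟩; rcases ho with ⟨a, ha⟩; exact ⟨a + 2 * c, by omega⟩
      refine ⟨Θ ⁻¹' {Θ x} ∩ Θ' ⁻¹' {Θ' x}, ?_, ⟨rfl, rfl⟩, ?_⟩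
      · exact (@Continuous.isOpen_preimage X ℤ _ khalimsky Θ hΘ _ (khal_open (Or.inl ⟨_, ho, rfl⟩))).inter
          (@Continuous.isOpen_preimage X ℤ _ khalimsky Θ' hΘ' _ (khal_open (Or.inl ⟨_, ho', rfl⟩)))
      · rintro y ⟨h1, h2⟩
        simp only [Set.mem_preimage, Set.mem_singleton_iff] at h1 h2
        simp [h1, h2]
  rcases isEmpty_or_nonempty X with h | h
  · exact ⟨0, fun x => (h.false x).elim⟩
  · obtain ⟨x₀⟩ := h
    rcases hdvd x₀ with ⟨k, hk⟩
    refine ⟨k, fun x => ?_⟩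
    have := hlc.apply_eq_of_preconnectedSpace x x₀
    omega
end

section
/- Let X be a simply connected and locally path-connected topological space, and let g : X → ZMod 4 be continuous, where ZMod 4 carries the quotient topology coinduced from the Khalimsky topology on ℤ by the reduction map n ↦ (n : ZMod 4). Then there exists a continuous map Θ : X → ℤ (with ℤ carrying the Khalimsky topology) such that (Θ(x) : ZMod 4) = g(x) for all x ∈ X, i.e., g lifts through the reduction mod 4. -/
open Topology

namespace KhalLift

abbrev p (a : ℤ) : ZMod 4 := (a : ZMod 4)

def bad (b : Bool) : ZMod 4 := if b then 0 else 2

def off (b : Bool) (u : ZMod 4) : ℤ :=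
  if b then (u.val : ℤ) else (if u = 3 then -1 else (u.val : ℤ))

def Wset (b : Bool) : Set (ZMod 4) := {u | u ≠ bad b}

def sheet (b : Bool) (a : ℤ) : ℤ := (a - off b (p a)) / 4

def centerI (b : Bool) : ℤ := if b then 2 else 0

def Tset (b : Bool) (k : ℤ) : Set ℤ :=
  {4 * k + centerI b - 1, 4 * k + centerI b, 4 * k + centerI b + 1}

lemma cast_eq_iff_dvd (x y : ℤ) : (x : ZMod 4) = (y : ZMod 4) ↔ (4 : ℤ) ∣ y - x := by
  rw [ZMod.intCast_eq_intCast_iff, Int.ModEq]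
  constructor
  · intro h; exact Int.ModEq.dvd h
  · intro h; exact (Int.modEq_iff_dvd.mpr h)

lemma castAdd4 (k e : ℤ) : ((4 * k + e : ℤ) : ZMod 4) = (e : ZMod 4) := by
  rw [cast_eq_iff_dvd]; exact ⟨-k, by ring⟩

lemma S1 (b : Bool) (u : ZMod 4) (h : u ≠ bad b) : ((off b u : ℤ) : ZMod 4) = u := by
  revert h; revert u; revert b; decide

lemma S1' (b : Bool) (k : ℤ) (u : ZMod 4) (h : u ≠ bad b) : p (4 * k + off b u) = u := by
  rw [p, castAdd4]; exact S1 b u h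

lemma S2 (b : Bool) (a : ℤ) (h : p a ≠ bad b) : 4 * sheet b a + off b (p a) = a := by
  have hd : (4 : ℤ) ∣ a - off b (p a) := by
    rw [← cast_eq_iff_dvd]
    exact S1 b (p a) h
  rw [sheet, Int.mul_ediv_cancel' hd]; ring

lemma OffR (b : Bool) (u : ZMod 4) (h : u ≠ bad b) :
    off b u = centerI b - 1 ∨ off b u = centerI b ∨ off b u = centerI b + 1 := by
  revert h; revert u; revert b; decide

lemma S3e (b : Bool) (k e : ℤ) (he : e = centerI b - 1 ∨ e = centerI b ∨ e = centerI b + 1) :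
    p (4 * k + e) ≠ bad b ∧ sheet b (4 * k + e) = k := by
  have hb : (e : ZMod 4) ≠ bad b ∧ off b ((e : ZMod 4)) = e := by
    rcases he with rfl | rfl | rfl <;> cases b <;> simp only [centerI] <;> decide
  have hp : p (4 * k + e) = (e : ZMod 4) := castAdd4 k e
  refine ⟨by rw [hp]; exact hb.1, ?_⟩
  rw [sheet, hp, hb.2, add_sub_cancel_right]
  omega

lemma S3 (b : Bool) (k : ℤ) (a : ℤ) (h : a ∈ Tset b k) : p a ≠ bad b ∧ sheet b a = k := by
  rcases h with h | h | h
  · have := S3e b k (centerI b - 1) (Or.inl rfl)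
    rwa [show 4 * k + (centerI b - 1) = 4 * k + centerI b - 1 by ring, ← h] at this
  · have := S3e b k (centerI b) (Or.inr (Or.inl rfl))
    rwa [← h] at this
  · have := S3e b k (centerI b + 1) (Or.inr (Or.inr rfl))
    rwa [show 4 * k + (centerI b + 1) = 4 * k + centerI b + 1 by ring, ← h] at this

lemma S3' (b : Bool) (a : ℤ) (h : p a ≠ bad b) : a ∈ Tset b (sheet b a) := by
  have h2 := S2 b a h
  simp only [Tset, Set.mem_insert_iff, Set.mem_singleton_iff]
  rcases OffR b (p a) h with ho | ho | ho <;> rw [ho] at h2 <;> omega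

/-! ### Topology basics -/

lemma isOpen_odd {m : ℤ} (h : Odd m) : IsOpen[khalimsky] ({m} : Set ℤ) :=
  TopologicalSpace.GenerateOpen.basic _ (Or.inl ⟨m, h, rfl⟩)

lemma isOpen_triple {m : ℤ} (h : Even m) : IsOpen[khalimsky] ({m - 1, m, m + 1} : Set ℤ) :=
  TopologicalSpace.GenerateOpen.basic _ (Or.inr ⟨m, h, rfl⟩)

lemma isOpen_Tset (b : Bool) (k : ℤ) : IsOpen[khalimsky] (Tset b k) := by
  have hc : Even (centerI b) := by cases b <;> decide
  have he : Even (4 * k + centerI b) := Even.add ⟨2 * k, by ring⟩ hc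
  exact isOpen_triple he

/-- In any Khalimsky-open set, an even member has its two odd neighbours in the set. -/
lemma KH1 {t : Set ℤ} (ht : IsOpen[khalimsky] t) :
    ∀ m : ℤ, Even m → m ∈ t → m - 1 ∈ t ∧ m + 1 ∈ t := by
  have ht' : TopologicalSpace.GenerateOpen
      ({S | ∃ n : ℤ, Odd n ∧ S = {n}} ∪ {S | ∃ n : ℤ, Even n ∧ S = {n - 1, n, n + 1}}) t := ht
  clear ht
  induction ht' with
  | basic S hS =>
    intro m hm hmS
    rcases hS with ⟨n, hn, rfl⟩ | ⟨n, hn, rfl⟩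
    · rcases hmS with rfl
      exact absurd hm (by simpa using hn)
    · simp only [Set.mem_insert_iff, Set.mem_singleton_iff] at hmS
      rcases hmS with h | h | h
      · exfalso
        rcases hm with ⟨c, hc⟩; rcases hn with ⟨d, hd⟩; omega
      · subst h; exact ⟨Or.inl rfl, Or.inr (Or.inr rfl)⟩
      · exfalso
        rcases hm with ⟨c, hc⟩; rcases hn with ⟨d, hd⟩; omega
  | univ => intro m _ _; exact ⟨trivial, trivial⟩
  | inter s t _ _ ihs iht =>
    intro m hm hmS
    exact ⟨⟨(ihs m hm hmS.1).1, (iht m hm hmS.2).1⟩, ⟨(ihs m hm hmS.1).2, (iht m hm hmS.2).2⟩⟩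
  | sUnion S _ ih =>
    intro m hm hmS
    rcases hmS with ⟨s, hs, hms⟩
    exact ⟨⟨s, hs, (ih s hs m hm hms).1⟩, ⟨s, hs, (ih s hs m hm hms).2⟩⟩

lemma isOpen_mod4 {S : Set (ZMod 4)} (h : IsOpen[khalimsky] (p ⁻¹' S)) :
    IsOpen[khalimskyMod4] S := by
  rw [khalimskyMod4, isOpen_coinduced]; exact h

lemma isOpen_one : IsOpen[khalimskyMod4] ({1} : Set (ZMod 4)) := by
  apply isOpen_mod4
  have : p ⁻¹' ({1} : Set (ZMod 4)) = ⋃ k : ℤ, ({4 * k + 1} : Set ℤ) := by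
    ext a
    simp only [Set.mem_preimage, Set.mem_singleton_iff, Set.mem_iUnion]
    constructor
    · intro ha
      have : (4:ℤ) ∣ a - 1 := by
        rw [← cast_eq_iff_dvd]; exact_mod_cast ha.symm
      rcases this with ⟨k, hk⟩
      exact ⟨k, by omega⟩
    · rintro ⟨k, rfl⟩; rw [p, castAdd4]; norm_num
  rw [this]
  letI := khalimsky
  exact isOpen_iUnion fun k => isOpen_odd ⟨2 * k, by ring⟩

lemma isOpen_three : IsOpen[khalimskyMod4] ({3} : Set (ZMod 4)) := by
  apply isOpen_mod4
  have : p ⁻¹' ({3} : Set (ZMod 4)) = ⋃ k : ℤ, ({4 * k + 3} : Set ℤ) := by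
    ext a
    simp only [Set.mem_preimage, Set.mem_singleton_iff, Set.mem_iUnion]
    constructor
    · intro ha
      have : (4:ℤ) ∣ a - 3 := by
        rw [← cast_eq_iff_dvd]; exact_mod_cast ha.symm
      rcases this with ⟨k, hk⟩
      exact ⟨k, by omega⟩
    · rintro ⟨k, rfl⟩; rw [p, castAdd4]; norm_num
  rw [this]
  letI := khalimsky
  exact isOpen_iUnion fun k => isOpen_odd ⟨2 * k + 1, by ring⟩

lemma isOpen_W (b : Bool) : IsOpen[khalimskyMod4] (Wset b) := by
  apply isOpen_mod4
  have : p ⁻¹' Wset b = ⋃ k : ℤ, Tset b k := by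
    ext a
    simp only [Set.mem_preimage, Wset, Set.mem_setOf_eq, Set.mem_iUnion]
    constructor
    · intro ha; exact ⟨sheet b a, S3' b a ha⟩
    · rintro ⟨k, hk⟩; exact (S3 b k a hk).1
  rw [this]
  letI := khalimsky
  exact isOpen_iUnion fun k => isOpen_Tset b k

lemma Wset_eq (b : Bool) : Wset b = {1, 3, bad (!b)} := by
  ext u
  simp only [Wset, Set.mem_setOf_eq, Set.mem_insert_iff, Set.mem_singleton_iff]
  revert u; revert b; decide

lemma open_crit {b : Bool} {S : Set (ZMod 4)} (h1 : S ⊆ Wset b)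
    (h2 : bad (!b) ∈ S → 1 ∈ S ∧ 3 ∈ S) : IsOpen[khalimskyMod4] S := by
  classical
  have hSeq : S = ((if (1 : ZMod 4) ∈ S then ({1} : Set (ZMod 4)) else ∅) ∪
      (if (3 : ZMod 4) ∈ S then ({3} : Set (ZMod 4)) else ∅)) ∪
      (if bad (!b) ∈ S then Wset b else ∅) := by
    ext u
    constructor
    · intro hu
      have := h1 hu
      rw [Wset_eq] at this
      rcases this with rfl | rfl | rfl
      · exact Or.inl (Or.inl (by simp [hu]))
      · exact Or.inl (Or.inr (by simp [hu]))
      · exact Or.inr (by simp [hu, h1 hu])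
    · intro hu
      rcases hu with (hu | hu) | hu
      · split at hu
        · rcases hu with rfl; assumption
        · exact absurd hu (Set.notMem_empty u)
      · split at hu
        · rcases hu with rfl; assumption
        · exact absurd hu (Set.notMem_empty u)
      · split at hu
        next hc =>
          rw [Wset_eq] at hu
          rcases hu with rfl | rfl | rfl
          · exact (h2 hc).1
          · exact (h2 hc).2
          · exact hc
        · exact absurd hu (Set.notMem_empty u)
  rw [hSeq]
  letI := khalimskyMod4
  refine IsOpen.union (IsOpen.union ?_ ?_) ?_ <;> split <;>
    first
      | exact isOpen_one
      | exact isOpen_three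
      | exact isOpen_W b
      | exact @isOpen_empty _ khalimskyMod4

/-! ### Continuity of the local lift formula -/

lemma openSv (b : Bool) (k : ℤ) {t : Set ℤ} (ht : IsOpen[khalimsky] t) :
    IsOpen[khalimskyMod4] {u : ZMod 4 | u ≠ bad b ∧ 4 * k + off b u ∈ t} := by
  apply open_crit (b := b)
  · intro u hu; exact hu.1
  · intro hc
    have hbad : (bad (!b) : ZMod 4) ≠ bad b := by cases b <;> decide
    have hoc : off b (bad (!b)) = centerI b := by cases b <;> decide
    have hmem : 4 * k + centerI b ∈ t := by rw [← hoc]; exact hc.2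
    have heven : Even (4 * k + centerI b) := by
      have hce : Even (centerI b) := by cases b <;> decide
      exact Even.add ⟨2 * k, by ring⟩ hce
    have hkh := KH1 ht _ heven hmem
    have h1 : off b (1 : ZMod 4) = centerI b + 1 ∨ off b (1 : ZMod 4) = centerI b - 1 := by
      cases b <;> decide
    have h3 : off b (3 : ZMod 4) = centerI b + 1 ∨ off b (3 : ZMod 4) = centerI b - 1 := by
      cases b <;> decide
    constructor
    · refine ⟨by cases b <;> decide, ?_⟩
      rcases h1 with h1 | h1 <;> rw [h1]
      · rw [show 4 * k + (centerI b + 1) = 4 * k + centerI b + 1 by ring]; exact hkh.2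
      · rw [show 4 * k + (centerI b - 1) = 4 * k + centerI b - 1 by ring]; exact hkh.1
    · refine ⟨by cases b <;> decide, ?_⟩
      rcases h3 with h3 | h3 <;> rw [h3]
      · rw [show 4 * k + (centerI b + 1) = 4 * k + centerI b + 1 by ring]; exact hkh.2
      · rw [show 4 * k + (centerI b - 1) = 4 * k + centerI b - 1 by ring]; exact hkh.1

lemma LEMC {Y : Type*} [ty : TopologicalSpace Y] {f : Y → ZMod 4}
    (hf : Continuous[ty, khalimskyMod4] f) (b : Bool) (k : ℤ) {A : Set Y}
    (hA : ∀ y ∈ A, f y ≠ bad b) :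
    @ContinuousOn Y ℤ ty khalimsky (fun y => 4 * k + off b (f y)) A := by
  letI := khalimskyMod4
  letI := khalimsky
  rw [@continuousOn_iff' Y ℤ ty khalimsky]
  intro t ht
  refine ⟨f ⁻¹' {u : ZMod 4 | u ≠ bad b ∧ 4 * k + off b u ∈ t},
    (openSv b k ht).preimage hf, ?_⟩
  ext y
  simp only [Set.mem_inter_iff, Set.mem_preimage, Set.mem_setOf_eq]
  constructor
  · rintro ⟨hyt, hyA⟩; exact ⟨⟨hA y hyA, hyt⟩, hyA⟩
  · rintro ⟨⟨_, hyt⟩, hyA⟩; exact ⟨hyt, hyA⟩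

/-! ### Uniqueness of lifts -/

def win (a : ℤ) : Set ℤ := if Even a then {a - 1, a, a + 1} else {a}

lemma isOpen_win (a : ℤ) : IsOpen[khalimsky] (win a) := by
  rw [win]; split
  · exact isOpen_triple ‹_›
  · exact isOpen_odd (Int.not_even_iff_odd.mp ‹_›)

lemma mem_win (a : ℤ) : a ∈ win a := by
  rw [win]; split
  · exact Or.inr (Or.inl rfl)
  · rfl

lemma win_close {a z : ℤ} (h : z ∈ win a) : |z - a| ≤ 1 := by
  rw [win] at h; split at h
  · simp only [Set.mem_insert_iff, Set.mem_singleton_iff] at h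
    rcases h with rfl | rfl | rfl <;> simp
  · rcases h with rfl; simp

lemma lift_unique {Y : Type*} [ty : TopologicalSpace Y] [PreconnectedSpace Y]
    {f : Y → ZMod 4} {Θ₁ Θ₂ : Y → ℤ}
    (h₁ : Continuous[ty, khalimsky] Θ₁) (h₂ : Continuous[ty, khalimsky] Θ₂)
    (l₁ : ∀ y, p (Θ₁ y) = f y) (l₂ : ∀ y, p (Θ₂ y) = f y)
    {y₀ : Y} (hy : Θ₁ y₀ = Θ₂ y₀) : ∀ y, Θ₁ y = Θ₂ y := by
  letI := khalimsky
  set D := {y | Θ₁ y = Θ₂ y} with hD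
  have hdvd : ∀ y, (4 : ℤ) ∣ Θ₂ y - Θ₁ y := by
    intro y
    rw [← cast_eq_iff_dvd]
    rw [show ((Θ₁ y : ℤ) : ZMod 4) = p (Θ₁ y) from rfl, show ((Θ₂ y : ℤ) : ZMod 4) = p (Θ₂ y) from rfl,
      l₁, l₂]
  have hopen : IsOpen D := by
    rw [isOpen_iff_forall_mem_open]
    intro y hyD
    refine ⟨Θ₁ ⁻¹' win (Θ₁ y) ∩ Θ₂ ⁻¹' win (Θ₁ y), ?_, ?_, ?_⟩
    · intro z hz
      have h1 := win_close hz.1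
      have h2 := win_close hz.2
      have := hdvd z
      simp only [hD, Set.mem_setOf_eq]
      rw [abs_le] at h1 h2; omega
    · exact ((isOpen_win _).preimage h₁).inter ((isOpen_win _).preimage h₂)
    · refine ⟨mem_win _, ?_⟩
      show Θ₂ y ∈ win (Θ₁ y)
      rw [show Θ₁ y = Θ₂ y from hyD]
      exact mem_win _
  have hclosed : IsClosed D := by
    rw [← isOpen_compl_iff, isOpen_iff_forall_mem_open]
    intro y hyD
    refine ⟨Θ₁ ⁻¹' win (Θ₁ y) ∩ Θ₂ ⁻¹' win (Θ₂ y), ?_, ?_, ?_⟩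
    · intro z hz hzD
      have h1 := win_close hz.1
      have h2 := win_close hz.2
      have hd := hdvd y
      have hne : Θ₁ y ≠ Θ₂ y := hyD
      have : Θ₁ z = Θ₂ z := hzD
      rw [abs_le] at h1 h2; omega
    · exact ((isOpen_win _).preimage h₁).inter ((isOpen_win _).preimage h₂)
    · exact ⟨mem_win _, mem_win _⟩
  have : D = Set.univ := by
    have := isClopen_iff.mp ⟨hclosed, hopen⟩
    rcases this with h | h
    · exact absurd (h ▸ hy : y₀ ∈ (∅ : Set Y)) (Set.notMem_empty y₀)
    · exact h
  intro y
  have : y ∈ D := this ▸ Set.mem_univ y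
  exact this

/-! ### Grid machinery on the unit interval -/

open unitInterval Set

noncomputable def sig (r : ℝ) : I := Set.projIcc 0 1 zero_le_one r

noncomputable def gpt (n i : ℕ) : I := sig (i / n)

def cellS (n i : ℕ) : Set I := {t : I | (i : ℝ) / n ≤ (t : ℝ) ∧ (t : ℝ) ≤ ((i : ℝ) + 1) / n}

noncomputable def idxn (n : ℕ) (t : I) : ℕ := min ⌊(t : ℝ) * n⌋₊ (n - 1)

lemma sig_coe {r : ℝ} (h0 : 0 ≤ r) (h1 : r ≤ 1) : ((sig r : I) : ℝ) = r := by
  rw [sig, Set.projIcc_of_mem zero_le_one ⟨h0, h1⟩]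

lemma gpt_coe {n i : ℕ} (hn : 0 < n) (hi : i ≤ n) : ((gpt n i : I) : ℝ) = i / n := by
  have hn' : (0 : ℝ) < n := by exact_mod_cast hn
  refine sig_coe (by positivity) ?_
  rw [div_le_one hn']
  exact_mod_cast hi

lemma gpt_zero {n : ℕ} : gpt n 0 = 0 := by
  apply Subtype.ext
  have : ((gpt n 0 : I) : ℝ) = 0 := by
    rw [gpt]
    push_cast
    rw [zero_div]
    exact sig_coe le_rfl zero_le_one
  rw [this]; rfl

lemma cellS_closed (n i : ℕ) : IsClosed (cellS n i) := by
  have : cellS n i = (Subtype.val : I → ℝ) ⁻¹' (Set.Icc ((i : ℝ) / n) (((i : ℝ) + 1) / n)) := rfl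
  rw [this]
  exact IsClosed.preimage continuous_subtype_val isClosed_Icc

lemma idx_self {n : ℕ} (hn : 0 < n) (t : I) : idxn n t < n ∧ t ∈ cellS n (idxn n t) := by
  have hn' : (0 : ℝ) < n := by exact_mod_cast hn
  have ht0 : (0:ℝ) ≤ (t:ℝ) := t.2.1
  have ht1 : (t:ℝ) ≤ 1 := t.2.2
  have htn : 0 ≤ (t:ℝ) * n := by positivity
  have hfl : (⌊(t:ℝ) * n⌋₊ : ℝ) ≤ (t:ℝ) * n := Nat.floor_le htn
  have hfl2 : (t:ℝ) * n < ⌊(t:ℝ) * n⌋₊ + 1 := Nat.lt_floor_add_one _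
  refine ⟨by rw [idxn]; omega, ?_, ?_⟩
  · rw [div_le_iff₀ hn']
    calc ((idxn n t : ℕ) : ℝ) ≤ (⌊(t:ℝ) * n⌋₊ : ℝ) := by exact_mod_cast min_le_left _ _
    _ ≤ (t:ℝ) * n := hfl
  · rw [le_div_iff₀ hn']
    by_cases hc : ⌊(t:ℝ) * n⌋₊ ≤ n - 1
    · have he : idxn n t = ⌊(t:ℝ) * n⌋₊ := min_eq_left hc
      rw [he]
      linarith [hfl2]
    · have he : idxn n t = n - 1 := min_eq_right (by omega)
      rw [he]
      have hcast : ((n - 1 : ℕ) : ℝ) + 1 = (n : ℝ) := by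
        have h1 : (1:ℕ) ≤ n := hn
        push_cast [Nat.cast_sub h1]
        ring
      rw [hcast]
      nlinarith

lemma cell_union {n : ℕ} (hn : 0 < n) : ⋃ i : Fin n, cellS n (i : ℕ) = Set.univ := by
  ext t
  simp only [Set.mem_iUnion, Set.mem_univ, iff_true]
  obtain ⟨h1, h2⟩ := idx_self hn t
  exact ⟨⟨idxn n t, h1⟩, h2⟩

lemma key_formula {n : ℕ} (hn : 0 < n) (F : ℕ → I → ℤ)
    (hjun : ∀ i, i + 1 < n → F (i+1) (gpt n (i+1)) = F i (gpt n (i+1)))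
    {i : ℕ} (hi : i < n) {t : I} (ht : t ∈ cellS n i) : F (idxn n t) t = F i t := by
  have hn' : (0 : ℝ) < n := by exact_mod_cast hn
  have ht0 : (0:ℝ) ≤ (t:ℝ) := t.2.1
  have htn : 0 ≤ (t:ℝ) * n := by positivity
  obtain ⟨hl, hu⟩ := ht
  have hl' : (i : ℝ) ≤ (t:ℝ) * n := by rwa [div_le_iff₀ hn'] at hl
  have hu' : (t:ℝ) * n ≤ (i : ℝ) + 1 := by rwa [le_div_iff₀ hn'] at hu
  have hi_le : i ≤ ⌊(t:ℝ)*n⌋₊ := Nat.le_floor hl'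
  have hle : ⌊(t:ℝ)*n⌋₊ ≤ i + 1 := by
    have h2 : (t:ℝ) * n ≤ ((i+1 : ℕ) : ℝ) := by push_cast; linarith
    calc ⌊(t:ℝ)*n⌋₊ ≤ ⌊((i+1:ℕ):ℝ)⌋₊ := Nat.floor_mono h2
    _ = i + 1 := Nat.floor_natCast _
  rcases Nat.eq_or_lt_of_le hi_le with heq | hlt
  · rw [idxn, ← heq, min_eq_left (by omega)]
  · have hj0 : ⌊(t:ℝ)*n⌋₊ = i + 1 := by omega
    have hge : ((i:ℝ) + 1) ≤ (t:ℝ) * n := by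
      have := Nat.floor_le htn
      rw [hj0] at this
      push_cast at this
      linarith
    have hteq : (t:ℝ) = ((i:ℝ) + 1) / n := by
      rw [eq_div_iff (ne_of_gt hn')]
      linarith
    have htg : t = gpt n (i+1) := by
      apply Subtype.ext
      rw [gpt_coe hn (by omega), hteq]
      push_cast
      ring
    by_cases h2 : i + 1 < n
    · rw [idxn, hj0, min_eq_left (by omega), htg]
      exact hjun i h2
    · have : n - 1 = i := by omega
      rw [idxn, hj0, min_eq_right (by omega), this]

/-! ### The partition lemma (Lebesgue number argument) -/

lemma PART (H : I × I → ZMod 4)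
    (hH : Continuous[instTopologicalSpaceProd, khalimskyMod4] H) (s₀ : I) :
    ∃ S : Set I, S ∈ nhds s₀ ∧ ∃ n : ℕ, 0 < n ∧ ∃ c : ℕ → Bool,
      ∀ i, i < n → ∀ s ∈ S, ∀ t : I, (i : ℝ) / n ≤ (t:ℝ) → (t:ℝ) ≤ ((i:ℝ) + 1) / n →
        H (s, t) ∈ Wset (c i) := by
  letI := khalimskyMod4
  have hopen : ∀ b : Bool, IsOpen (H ⁻¹' Wset b) := fun b => (isOpen_W b).preimage hH
  have hcov : (Set.univ : Set (I × I)) ⊆ ⋃ b : Bool, H ⁻¹' Wset b := by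
    intro z _
    have hz : H z ≠ bad false ∨ H z ≠ bad true := by
      have : ∀ u : ZMod 4, u ≠ bad false ∨ u ≠ bad true := by decide
      exact this (H z)
    rcases hz with h | h
    · exact Set.mem_iUnion.mpr ⟨false, h⟩
    · exact Set.mem_iUnion.mpr ⟨true, h⟩
  obtain ⟨δ, hδ, hball⟩ := lebesgue_number_lemma_of_metric isCompact_univ hopen hcov
  obtain ⟨n0, hn0⟩ := exists_nat_one_div_lt hδ
  set n := n0 + 1 with hn
  have hn' : (0:ℝ) < n := by positivity
  have h1n : 1 / (n:ℝ) < δ := by exact_mod_cast hn0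
  have hmid : ∀ i : ℕ, ∃ b : Bool,
      Metric.ball ((s₀, sig (((i:ℝ) + 1/2) / n)) : I × I) δ ⊆ H ⁻¹' Wset b := by
    intro i
    obtain ⟨b, hb⟩ := hball (s₀, sig (((i:ℝ) + 1/2) / n)) trivial
    exact ⟨b, hb⟩
  classical
  refine ⟨Metric.ball s₀ (δ/2), Metric.ball_mem_nhds _ (by linarith), n, by omega,
    fun i => (hmid i).choose, ?_⟩
  intro i hi s hs t htl htu
  have hmem := (hmid i).choose_spec
  apply hmem
  have hmc : ((sig (((i:ℝ) + 1/2) / n) : I) : ℝ) = ((i:ℝ) + 1/2) / n := by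
    apply sig_coe
    · positivity
    · rw [div_le_one hn']
      have : (i:ℝ) + 1 ≤ n := by exact_mod_cast hi
      linarith
  rw [Metric.mem_ball, Prod.dist_eq]
  apply max_lt
  · calc dist s s₀ < δ/2 := hs
    _ < δ := by linarith
  · rw [Subtype.dist_eq, hmc, Real.dist_eq]
    have e1 : ((i:ℝ)+1)/n = (i:ℝ)/n + 1/n := by ring
    have e2 : ((i:ℝ)+1/2)/n = (i:ℝ)/n + 1/(2*n) := by ring
    have e3 : 1/(2*(n:ℝ)) = (1/n)/2 := by ring
    rw [e1] at htu
    rw [e2]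
    have habs : |(t:ℝ) - ((i:ℝ)/n + 1/(2*n))| ≤ 1/(2*n) := by
      rw [abs_le]
      constructor <;> [linarith [htu]; linarith [htl]]
    calc |(t:ℝ) - ((i:ℝ)/n + 1/(2*n))| ≤ 1/(2*n) := habs
    _ = (1/n)/2 := e3
    _ < δ/2 := by linarith
    _ < δ := by linarith

lemma gpt_mem_cell {n i : ℕ} (hn : 0 < n) (hi : i < n) :
    gpt n i ∈ cellS n i ∧ gpt n (i+1) ∈ cellS n i := by
  have hn' : (0:ℝ) < n := by exact_mod_cast hn
  have c1 : ((gpt n i : I) : ℝ) = i/n := gpt_coe hn (by omega)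
  have c2 : ((gpt n (i+1) : I) : ℝ) = ((i:ℝ)+1)/n := by
    rw [gpt_coe hn (by omega)]; push_cast; ring
  constructor
  · exact ⟨le_of_eq c1.symm, by rw [c1]; gcongr; linarith⟩
  · exact ⟨by rw [c2]; gcongr; linarith, le_of_eq c2⟩

lemma zero_mem_cell {n : ℕ} (hn : 0 < n) : (0:I) ∈ cellS n 0 := by
  have hn' : (0:ℝ) < n := by exact_mod_cast hn
  have h0 : ((0:I):ℝ) = 0 := rfl
  constructor
  · rw [h0]; norm_num
  · rw [h0]; positivity

/-! ### Path lifting: existence -/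

lemma exists_lift (γ : I → ZMod 4) (hγ : Continuous[_, khalimskyMod4] γ)
    (a₀ : ℤ) (ha : p a₀ = γ 0) :
    ∃ Θ : I → ℤ, Continuous[_, khalimsky] Θ ∧ (∀ t, p (Θ t) = γ t) ∧ Θ 0 = a₀ := by
  letI := khalimskyMod4
  letI := khalimsky
  classical
  obtain ⟨S, hS, n, hn, c, hc⟩ := PART (fun z => γ z.2) (Continuous.comp hγ continuous_snd) 0
  have hs₀ : (0 : I) ∈ S := mem_of_mem_nhds hS
  have hc' : ∀ i, i < n → ∀ t : I, (i : ℝ) / n ≤ (t:ℝ) → (t:ℝ) ≤ ((i:ℝ) + 1) / n →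
      γ t ∈ Wset (c i) := fun i hi t htl htu => hc i hi 0 hs₀ t htl htu
  have hn' : (0:ℝ) < n := by exact_mod_cast hn
  set v : ℕ → ℤ :=
    fun m => Nat.rec a₀ (fun i vi => 4 * sheet (c i) vi + off (c i) (γ (gpt n (i+1)))) m with hv
  have hv0 : v 0 = a₀ := rfl
  have hvs : ∀ i, v (i+1) = 4 * sheet (c i) (v i) + off (c i) (γ (gpt n (i+1))) := fun i => rfl
  have hInv : ∀ i, i ≤ n → p (v i) = γ (gpt n i) := by
    intro i
    induction i with
    | zero => intro _; rw [hv0, gpt_zero]; exact ha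
    | succ i ih =>
      intro hi1
      rw [hvs]
      apply S1'
      have hmem := (gpt_mem_cell hn (show i < n by omega)).2
      exact hc' i (by omega) _ hmem.1 hmem.2
  set F : ℕ → I → ℤ := fun i t => 4 * sheet (c i) (v i) + off (c i) (γ t) with hF
  have hjun : ∀ i, i + 1 < n → F (i+1) (gpt n (i+1)) = F i (gpt n (i+1)) := by
    intro i hi
    have h1 : F i (gpt n (i+1)) = v (i+1) := (hvs i).symm
    have hmem := (gpt_mem_cell hn hi).1
    have hW : γ (gpt n (i+1)) ∈ Wset (c (i+1)) := hc' (i+1) hi _ hmem.1 hmem.2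
    have h2 : F (i+1) (gpt n (i+1)) = v (i+1) := by
      simp only [hF]
      rw [← hInv (i+1) (by omega)]
      exact S2 _ _ (by rw [hInv (i+1) (by omega)]; exact hW)
    rw [h2, h1]
  set Θ : I → ℤ := fun t => F (idxn n t) t with hΘ
  have hkey : ∀ i, i < n → ∀ t ∈ cellS n i, Θ t = F i t :=
    fun i hi t ht => key_formula hn F hjun hi ht
  have hcont : Continuous Θ := by
    apply LocallyFinite.continuous (f := fun i : Fin n => cellS n (i:ℕ))
      (locallyFinite_of_finite _) (cell_union hn) (fun i => cellS_closed n _)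
    intro i
    apply ContinuousOn.congr
      (f := F (i:ℕ))
      (LEMC hγ (c (i:ℕ)) (sheet (c (i:ℕ)) (v (i:ℕ))) (fun t ht => hc' (i:ℕ) i.2 t ht.1 ht.2))
    intro t ht
    exact hkey (i:ℕ) i.2 t ht
  refine ⟨Θ, hcont, ?_, ?_⟩
  · intro t
    obtain ⟨h1, h2⟩ := idx_self hn t
    show p (F (idxn n t) t) = γ t
    exact S1' _ _ _ (hc' _ h1 t h2.1 h2.2)
  · have h0 : (0:I) ∈ cellS n 0 := zero_mem_cell hn
    rw [hkey 0 hn 0 h0]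
    have hW : γ 0 ∈ Wset (c 0) := hc' 0 hn 0 h0.1 h0.2
    simp only [hF]
    rw [hv0, ← ha]
    exact S2 _ _ (by rw [ha]; exact hW)

lemma one_mem_cell {n : ℕ} (hn : 0 < n) : (1:I) ∈ cellS n (n-1) := by
  have hn' : (0:ℝ) < n := by exact_mod_cast hn
  have h1 : ((1:I):ℝ) = 1 := rfl
  have hcast : ((n - 1 : ℕ) : ℝ) = (n:ℝ) - 1 := by
    have : (1:ℕ) ≤ n := hn
    push_cast [Nat.cast_sub this]; ring
  constructor
  · rw [h1, hcast, div_le_one hn']; linarith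
  · rw [h1, hcast, le_div_iff₀ hn']; linarith

/-! ### Homotopy invariance of endpoints of lifts -/

lemma HI (H : I × I → ZMod 4) (hH : Continuous[instTopologicalSpaceProd, khalimskyMod4] H)
    (h0 : ∀ s, H (s, 0) = H (0, 0)) (h1 : ∀ s, H (s, 1) = H (0, 1))
    (a₀ : ℤ) (ha : p a₀ = H (0, 0))
    {Θ₀ Θ₁ : I → ℤ} (cc₀ : Continuous[_, khalimsky] Θ₀) (cc₁ : Continuous[_, khalimsky] Θ₁)
    (l₀ : ∀ t, p (Θ₀ t) = H (0, t)) (l₁ : ∀ t, p (Θ₁ t) = H (1, t))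
    (st₀ : Θ₀ 0 = a₀) (st₁ : Θ₁ 0 = a₀) : Θ₀ 1 = Θ₁ 1 := by
  letI := khalimskyMod4
  letI := khalimsky
  classical
  have hEx : ∀ s : I, ∃ Θ : I → ℤ, Continuous Θ ∧ (∀ t, p (Θ t) = H (s, t)) ∧ Θ 0 = a₀ := by
    intro s
    refine exists_lift (fun t => H (s,t)) (hH.comp (Continuous.prodMk_right s)) a₀ ?_
    show p a₀ = H (s, 0)
    rw [h0 s]; exact ha
  set L : I → I → ℤ := fun s => (hEx s).choose with hLdef
  have hL : ∀ s, Continuous (L s) ∧ (∀ t, p (L s t) = H (s, t)) ∧ L s 0 = a₀ :=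
    fun s => (hEx s).choose_spec
  set e : I → ℤ := fun s => L s 1 with hedef
  have hloc : ∀ σ₀ : I, ∀ᶠ s in nhds σ₀, e s = e σ₀ := by
    intro σ₀
    obtain ⟨S, hS, n, hn, c, hc⟩ := PART H hH σ₀
    have hσS : σ₀ ∈ S := mem_of_mem_nhds hS
    obtain ⟨hΘc, hΘl, hΘ0⟩ := hL σ₀
    set Θ : I → ℤ := L σ₀
    -- junction-control open sets
    set O : ℕ → Set I := fun i =>
      if H (σ₀, gpt n i) = 1 ∨ H (σ₀, gpt n i) = 3 then
        (fun s => H (s, gpt n i)) ⁻¹' {H (σ₀, gpt n i)} else Set.univ with hO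
    have hO_open : ∀ i, IsOpen (O i) := by
      intro i
      simp only [hO]
      split
      next hcase =>
        rcases hcase with hcase | hcase <;> rw [hcase]
        · exact isOpen_one.preimage (hH.comp (Continuous.prodMk_left _))
        · exact isOpen_three.preimage (hH.comp (Continuous.prodMk_left _))
      · exact isOpen_univ
    have hO_mem : ∀ i, σ₀ ∈ O i := by
      intro i
      simp only [hO]
      split
      · exact rfl
      · trivial
    have hS' : (S ∩ ⋂ i ∈ Finset.range (n+1), O i) ∈ nhds σ₀ := by
      refine Filter.inter_mem hS ?_
      refine (isOpen_biInter_finset (fun i _ => hO_open i)).mem_nhds ?_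
      exact Set.mem_iInter₂.mpr fun i _ => hO_mem i
    refine Filter.eventually_of_mem hS' ?_
    rintro s ⟨hsS, hsO'⟩
    have hsO : ∀ i, i ≤ n → s ∈ O i := by
      intro i hi
      exact Set.mem_iInter₂.mp hsO' i (Finset.mem_range.mpr (by omega))
    -- the transported lift
    set F : ℕ → I → ℤ := fun i t => 4 * sheet (c i) (Θ t) + off (c i) (H (s, t)) with hF
    have hWσ : ∀ i, i < n → ∀ t ∈ cellS n i, H (σ₀, t) ∈ Wset (c i) :=
      fun i hi t ht => hc i hi σ₀ hσS t ht.1 ht.2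
    have hWs : ∀ i, i < n → ∀ t ∈ cellS n i, H (s, t) ∈ Wset (c i) :=
      fun i hi t ht => hc i hi s hsS t ht.1 ht.2
    have hpΘ : ∀ i, i < n → ∀ t ∈ cellS n i, p (Θ t) ≠ bad (c i) := by
      intro i hi t ht
      rw [hΘl t]
      exact hWσ i hi t ht
    have hjun : ∀ i, i + 1 < n → F (i+1) (gpt n (i+1)) = F i (gpt n (i+1)) := by
      intro i hi
      set t := gpt n (i+1) with htdef
      have hm1 : t ∈ cellS n i := (gpt_mem_cell hn (by omega)).2
      have hm2 : t ∈ cellS n (i+1) := (gpt_mem_cell hn hi).1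
      by_cases hcc : c (i+1) = c i
      · simp only [hF, hcc]
      · have hb0 : p (Θ t) ≠ bad (c i) := hpΘ i (by omega) t hm1
        have hb1 : p (Θ t) ≠ bad (c (i+1)) := hpΘ (i+1) hi t hm2
        have hu13 : H (σ₀, t) = 1 ∨ H (σ₀, t) = 3 := by
          rw [← hΘl t]
          have hd : ∀ u : ZMod 4, u ≠ bad false → u ≠ bad true → (u = 1 ∨ u = 3) := by decide
          cases hb : c i <;> cases hb' : c (i+1)
          · exact absurd (hb'.trans hb.symm) hcc
          · exact hd _ (hb ▸ hb0) (hb' ▸ hb1)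
          · exact hd _ (hb' ▸ hb1) (hb ▸ hb0)
          · exact absurd (hb'.trans hb.symm) hcc
        have hs_eq : H (s, t) = H (σ₀, t) := by
          have hmem := hsO (i+1) (by omega)
          simp only [hO, ← htdef, if_pos hu13] at hmem
          exact hmem
        have hgen : ∀ j : ℕ, p (Θ t) ≠ bad (c j) → F j t = Θ t := by
          intro j hj
          simp only [hF]
          rw [hs_eq, ← hΘl t]
          exact S2 _ _ hj
        rw [hgen (i+1) hb1, hgen i hb0]
    set Φ : I → ℤ := fun t => F (idxn n t) t with hΦ
    have hkey : ∀ i, i < n → ∀ t ∈ cellS n i, Φ t = F i t :=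
      fun i hi t ht => key_formula hn F hjun hi ht
    have hFcont : ∀ i, i < n → ContinuousOn (F i) (cellS n i) := by
      intro i hi
      intro t₀ ht₀
      set k := sheet (c i) (Θ t₀) with hk
      have hNopen : IsOpen (Θ ⁻¹' Tset (c i) k) := (isOpen_Tset _ _).preimage hΘc
      have ht₀N : t₀ ∈ Θ ⁻¹' Tset (c i) k := S3' _ _ (hpΘ i hi t₀ ht₀)
      have hG : ContinuousOn (fun t => 4 * k + off (c i) (H (s, t))) (cellS n i) :=
        LEMC (hH.comp (Continuous.prodMk_right s)) (c i) k (fun t ht => hWs i hi t ht)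
      refine ContinuousWithinAt.congr_of_eventuallyEq (hG t₀ ht₀) ?_ rfl
      refine Filter.eventually_of_mem
        (mem_nhdsWithin_of_mem_nhds (hNopen.mem_nhds ht₀N)) ?_
      intro t ht
      simp only [hF]
      rw [(S3 (c i) k (Θ t) ht).2]
    have hΦcont : Continuous Φ := by
      apply LocallyFinite.continuous (f := fun i : Fin n => cellS n (i:ℕ))
        (locallyFinite_of_finite _) (cell_union hn) (fun i => cellS_closed n _)
      intro i
      apply ContinuousOn.congr (hFcont (i:ℕ) i.2)
      intro t ht
      exact hkey (i:ℕ) i.2 t ht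
    have hΦlift : ∀ t, p (Φ t) = H (s, t) := by
      intro t
      obtain ⟨hi1, hi2⟩ := idx_self hn t
      show p (F (idxn n t) t) = H (s, t)
      exact S1' _ _ _ (hWs _ hi1 t hi2)
    have hΦ0 : Φ 0 = a₀ := by
      have h0c : (0:I) ∈ cellS n 0 := zero_mem_cell hn
      rw [hkey 0 hn 0 h0c]
      have hs0 : H (s, 0) = p (Θ 0) := by
        rw [h0 s, ← h0 σ₀, hΘl 0]
      simp only [hF]
      rw [hs0, S2 _ _ (hpΘ 0 hn 0 h0c), hΘ0]
    have hΦ1 : Φ 1 = Θ 1 := by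
      have h1c : (1:I) ∈ cellS n (n-1) := one_mem_cell hn
      rw [hkey (n-1) (by omega) 1 h1c]
      have hs1 : H (s, 1) = p (Θ 1) := by
        rw [h1 s, ← h1 σ₀, hΘl 1]
      simp only [hF]
      rw [hs1, S2 _ _ (hpΘ (n-1) (by omega) 1 h1c)]
    -- uniqueness
    obtain ⟨hLc, hLl, hL0⟩ := hL s
    have := lift_unique (f := fun t => H (s, t)) hLc hΦcont hLl hΦlift
      (y₀ := 0) (by rw [hL0, hΦ0])
    show L s 1 = L σ₀ 1
    rw [this 1, hΦ1]
  have hconst : e 0 = e 1 := by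
    have hlc : IsLocallyConstant e := (IsLocallyConstant.iff_eventually_eq e).mpr hloc
    exact hlc.apply_eq_of_preconnectedSpace 0 1
  have he0 : Θ₀ 1 = e 0 := by
    obtain ⟨hLc, hLl, hL0⟩ := hL 0
    exact lift_unique (f := fun t => H (0, t)) cc₀ hLc l₀ hLl (y₀ := 0) (by rw [st₀, hL0]) 1
  have he1 : Θ₁ 1 = e 1 := by
    obtain ⟨hLc, hLl, hL0⟩ := hL 1
    exact lift_unique (f := fun t => H (1, t)) cc₁ hLc l₁ hLl (y₀ := 0) (by rw [st₁, hL0]) 1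
  rw [he0, he1, hconst]

lemma sig_zero : sig 0 = 0 := by
  apply Subtype.ext
  rw [sig_coe le_rfl zero_le_one]; rfl

lemma sig_one : sig 1 = 1 := by
  apply Subtype.ext
  rw [sig_coe zero_le_one le_rfl]; rfl

end KhalLift

open KhalLift Topology unitInterval

/-- Lifting theorem: a continuous map from a simply connected, locally path-connected
space to `ZMod 4` (quotient Khalimsky topology) lifts through the reduction map
`mod₄ : ℤ → ZMod 4`, with `ℤ` carrying the Khalimsky topology. -/
theorem exists_lift_mod4 {X : Type*} [TopologicalSpace X] [SimplyConnectedSpace X]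
    [LocallyPathConnectedSpace X] (g : X → ZMod 4)
    (hg : @Continuous X (ZMod 4) _ khalimskyMod4 g) :
    ∃ Θ : X → ℤ, @Continuous X ℤ _ khalimsky Θ ∧ ∀ x : X, (Θ x : ZMod 4) = g x := by
  letI := khalimskyMod4
  letI := khalimsky
  classical
  obtain ⟨x₀⟩ : Nonempty X := inferInstance
  have hval : ∀ a : ZMod 4, ((a.val : ℤ) : ZMod 4) = a := by decide
  set a₀ : ℤ := ((g x₀).val : ℤ) with ha₀
  have ha : p a₀ = g x₀ := hval _
  have hEx : ∀ x : X, ∃ Θ : I → ℤ, Continuous Θ ∧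
      (∀ t, p (Θ t) = g (PathConnectedSpace.somePath x₀ x t)) ∧ Θ 0 = a₀ := by
    intro x
    refine exists_lift (fun t => g (PathConnectedSpace.somePath x₀ x t))
      (hg.comp (PathConnectedSpace.somePath x₀ x).continuous) a₀ ?_
    show p a₀ = g (PathConnectedSpace.somePath x₀ x 0)
    rw [Path.source]; exact ha
  set L : X → I → ℤ := fun x => (hEx x).choose with hLdef
  have hL : ∀ x, Continuous (L x) ∧
      (∀ t, p (L x t) = g (PathConnectedSpace.somePath x₀ x t)) ∧ L x 0 = a₀ :=
    fun x => (hEx x).choose_spec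
  set Θf : X → ℤ := fun x => L x 1 with hΘfdef
  have PI : ∀ (x : X) (η : Path x₀ x) (Λ : I → ℤ), Continuous Λ →
      (∀ t, p (Λ t) = g (η t)) → Λ 0 = a₀ → Λ 1 = Θf x := by
    intro x η Λ hΛc hΛl hΛ0
    obtain ⟨h⟩ := SimplyConnectedSpace.paths_homotopic (PathConnectedSpace.somePath x₀ x) η
    set H : I × I → ZMod 4 := fun z => g (h z) with hHdef
    have hHc : Continuous H := hg.comp h.continuous
    have hlift0 : ∀ t, p (L x t) = H (0, t) := by
      intro t
      rw [(hL x).2.1 t]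
      simp only [hHdef]
      rw [h.apply_zero]
      rfl
    have hlift1 : ∀ t, p (Λ t) = H (1, t) := by
      intro t
      rw [hΛl t]
      simp only [hHdef]
      rw [h.apply_one]
      rfl
    have hsrc : ∀ s, H (s, 0) = H (0, 0) := by
      intro s
      simp only [hHdef]
      rw [h.source s, h.source 0]
    have htgt : ∀ s, H (s, 1) = H (0, 1) := by
      intro s
      simp only [hHdef]
      rw [h.target s, h.target 0]
    have hha : p a₀ = H (0, 0) := by
      simp only [hHdef]
      rw [h.source 0]
      exact ha
    exact (HI H hHc hsrc htgt a₀ hha (hL x).1 hΛc hlift0 hlift1 (hL x).2.2 hΛ0).symm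
  have hlift : ∀ x, p (Θf x) = g x := by
    intro x
    show p (L x 1) = g x
    rw [(hL x).2.1 1, Path.target]
  refine ⟨Θf, ?_, hlift⟩
  rw [continuous_iff_continuousAt]
  intro x
  set b : Bool := decide (g x = 2 ∨ g x = 3) with hb
  have hgb : g x ≠ bad b := by
    by_cases hx : g x = 2 ∨ g x = 3
    · have hbt : b = true := by rw [hb]; exact decide_eq_true hx
      rw [hbt]
      rcases hx with hx | hx <;> rw [hx] <;> decide
    · have hbf : b = false := by rw [hb]; exact decide_eq_false hx
      rw [hbf]
      push_neg at hx
      exact hx.1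
  set N : Set X := g ⁻¹' Wset b with hNdef
  have hNopen : IsOpen N := (isOpen_W b).preimage hg
  have hNmem : N ∈ 𝓝 x := hNopen.mem_nhds hgb
  obtain ⟨P, ⟨hPnhds, hPpc⟩, hPN⟩ := (path_connected_basis x).mem_iff.mp hNmem
  have hxP : x ∈ P := mem_of_mem_nhds hPnhds
  have hformula : ∀ y ∈ P, Θf y = 4 * sheet b (Θf x) + off b (g y) := by
    intro y hyP
    obtain ⟨δ, hδP⟩ := hPpc.joinedIn x hxP y hyP
    have hWδ : ∀ u : I, g (δ u) ≠ bad b := fun u => hPN (hδP u)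
    set M : I → ℤ := fun t => 4 * sheet b (Θf x) + off b (g (δ t)) with hMdef
    have hMc : Continuous M := by
      have hco := LEMC (Y := I) (f := fun t => g (δ t)) (hg.comp δ.continuous) b
        (sheet b (Θf x)) (A := Set.univ) (fun t _ => hWδ t)
      exact continuousOn_univ.mp hco
    have hM0 : M 0 = Θf x := by
      simp only [hMdef]
      rw [Path.source]
      have hpx : p (Θf x) = g x := hlift x
      rw [← hpx]
      exact S2 b (Θf x) (by rw [hpx]; exact hgb)
    have hMl : ∀ u, p (M u) = g (δ u) := fun u => S1' _ _ _ (hWδ u)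
    set Λx : I → ℤ := L x with hΛxdef
    have hΛx1 : Λx 1 = Θf x := rfl
    set Ψ : I → ℤ := fun t =>
      if (t : ℝ) ≤ 1/2 then Λx (sig (2 * (t:ℝ))) else M (sig (2 * (t:ℝ) - 1)) with hΨdef
    have hΨc : Continuous Ψ := by
      refine Continuous.if_le ?_ ?_ continuous_subtype_val continuous_const ?_
      · exact (hL x).1.comp (continuous_projIcc.comp
          (continuous_const.mul continuous_subtype_val))
      · exact hMc.comp (continuous_projIcc.comp
          ((continuous_const.mul continuous_subtype_val).sub continuous_const))
      · intro t hteq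
        have h2t : (2:ℝ) * (t:ℝ) = 1 := by rw [hteq]; ring
        have hsg1 : sig (2 * (t:ℝ)) = 1 := by rw [h2t]; exact sig_one
        have hsg0 : sig (2 * (t:ℝ) - 1) = 0 := by
          rw [h2t, show (1:ℝ) - 1 = 0 by ring]; exact sig_zero
        rw [hsg1, hsg0, hM0, hΛx1]
    have hΨ0 : Ψ 0 = a₀ := by
      have hc0 : ((0:I):ℝ) = 0 := rfl
      simp only [hΨdef, hc0]
      rw [if_pos (by norm_num : (0:ℝ) ≤ 1/2), show (2:ℝ) * 0 = 0 by ring, sig_zero]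
      exact (hL x).2.2
    have hΨl : ∀ t, p (Ψ t) = g (((PathConnectedSpace.somePath x₀ x).trans δ) t) := by
      intro t
      rw [Path.trans_apply]
      by_cases hcase : (t:ℝ) ≤ 1/2
      · simp only [hΨdef]
        rw [if_pos hcase, dif_pos hcase, (hL x).2.1]
        have ht0 : (0:ℝ) ≤ (t:ℝ) := t.2.1
        exact congrArg _ (congrArg _ (Subtype.ext (sig_coe (by linarith) (by linarith))))
      · simp only [hΨdef]
        rw [if_neg hcase, dif_neg hcase, hMl]
        push_neg at hcase
        have ht1 : (t:ℝ) ≤ 1 := t.2.2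
        exact congrArg _ (congrArg _ (Subtype.ext (sig_coe (by linarith) (by linarith))))
    have hΨ1 : Ψ 1 = M 1 := by
      have hc1 : ((1:I):ℝ) = 1 := rfl
      simp only [hΨdef, hc1]
      rw [if_neg (by norm_num), show (2:ℝ) * 1 - 1 = 1 by ring, sig_one]
    have hPIa := PI y ((PathConnectedSpace.somePath x₀ x).trans δ) Ψ hΨc hΨl hΨ0
    rw [← hPIa, hΨ1, hMdef]
    simp only
    rw [Path.target]
  have hCA : ContinuousAt (fun y => 4 * sheet b (Θf x) + off b (g y)) x := by
    have hco := LEMC hg b (sheet b (Θf x)) (A := N) (fun y hy => hy)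
    exact hco.continuousAt hNmem
  exact hCA.congr (Filter.eventuallyEq_of_mem hPnhds fun y hy => (hformula y hy).symm)
end
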